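/- arXiv:1312.2537 — 8 statements merged into one kernel-verified Lean document; each statement's English description precedes it below -/
import Mathlib

section
/- (Jakubík) Let L be a finite lattice and let p and q be prime intervals in L. Then q is collapsed by con(p) if and only if p is congruence-projective to q, i.e., there is a finite sequence of intervals from p to q, each step being a congruence-perspectivity up or down. -/
universe u

/-- A congruence of a lattice: an equivalence relation compatible with `⊔` and `⊓`. -/
structure LatCon (L : Type u) [Lattice L] : Type u where
  rel : L → L → Prop
  refl : ∀ a, rel a a
  symm : ∀ {a b}, rel a b → rel b a
  trans : ∀ {a b c}, rel a b → rel b c → rel a c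
  sup_comp : ∀ {a b c d}, rel a b → rel c d → rel (a ⊔ c) (b ⊔ d)
  inf_comp : ∀ {a b c d}, rel a b → rel c d → rel (a ⊓ c) (b ⊓ d)

variable {L : Type u} [Lattice L]

/-- The inclusion order on congruences. -/
def LatCon.le (α β : LatCon L) : Prop := ∀ a b : L, α.rel a b → β.rel a b

/-- The principal congruence `con(x, y)`: the smallest congruence collapsing `x` and `y`. -/
def conOf (x y : L) : LatCon L where
  rel a b := ∀ θ : LatCon L, θ.rel x y → θ.rel a b
  refl a := fun θ _ => θ.refl a
  symm h := fun θ hθ => θ.symm (h θ hθ)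
  trans h₁ h₂ := fun θ hθ => θ.trans (h₁ θ hθ) (h₂ θ hθ)
  sup_comp h₁ h₂ := fun θ hθ => θ.sup_comp (h₁ θ hθ) (h₂ θ hθ)
  inf_comp h₁ h₂ := fun θ hθ => θ.inf_comp (h₁ θ hθ) (h₂ θ hθ)

/-- The bottom congruence: equality. -/
def conBot : LatCon L where
  rel a b := a = b
  refl _ := rfl
  symm h := h.symm
  trans h₁ h₂ := h₁.trans h₂
  sup_comp h₁ h₂ := by rw [h₁, h₂]
  inf_comp h₁ h₂ := by rw [h₁, h₂]

/-- The join of two congruences: the smallest congruence containing both. -/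
def conJoin (α β : LatCon L) : LatCon L where
  rel a b := ∀ θ : LatCon L, α.le θ → β.le θ → θ.rel a b
  refl a := fun θ _ _ => θ.refl a
  symm h := fun θ hα hβ => θ.symm (h θ hα hβ)
  trans h₁ h₂ := fun θ hα hβ => θ.trans (h₁ θ hα hβ) (h₂ θ hα hβ)
  sup_comp h₁ h₂ := fun θ hα hβ => θ.sup_comp (h₁ θ hα hβ) (h₂ θ hα hβ)
  inf_comp h₁ h₂ := fun θ hα hβ => θ.inf_comp (h₁ θ hα hβ) (h₂ θ hα hβ)

/-- A congruence is join-irreducible if it is not the bottom congruence and is not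
the join of two congruences unless it equals one of them. -/
def LatCon.JoinIrreducible (θ : LatCon L) : Prop :=
  θ ≠ conBot ∧ ∀ α β : LatCon L, θ = conJoin α β → θ = α ∨ θ = β

/-- `p` is a prime interval: its bottom is covered by its top. -/
def IsPrimeInt (p : L × L) : Prop := p.1 ⋖ p.2

/-- `[a, b]` is perspective up to `[c, d]`: `b ⊔ c = d` and `a = b ⊓ c`. -/
def PerspUp (p q : L × L) : Prop := p.2 ⊔ q.1 = q.2 ∧ p.1 = p.2 ⊓ q.1

/-- `[a, b]` is perspective down to `[c, d]`: `a ⊓ d = c` and `a ⊔ d = b`. -/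
def PerspDn (p q : L × L) : Prop := p.1 ⊓ q.2 = q.1 ∧ p.1 ⊔ q.2 = p.2

/-- Perspectivity: up or down. -/
def Persp (p q : L × L) : Prop := PerspUp p q ∨ PerspDn p q

/-- `p` is prime-perspective down to `q`: `1_q ≤ 1_p`, `p` is perspective down onto the
interval `[0_p ⊓ 1_q, 1_q]` (i.e. `0_p ⊔ 1_q = 1_p`), and `q ⊆ [0_p ⊓ 1_q, 1_q]`
(i.e. `0_p ⊓ 1_q ≤ 0_q`). -/
def PPerspDn (p q : L × L) : Prop := q.2 ≤ p.2 ∧ p.1 ⊔ q.2 = p.2 ∧ p.1 ⊓ q.2 ≤ q.1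

/-- `p` is prime-perspective up to `q`: the dual of `PPerspDn`. -/
def PPerspUp (p q : L × L) : Prop := p.1 ≤ q.1 ∧ p.2 ⊓ q.1 = p.1 ∧ q.2 ≤ p.2 ⊔ q.1

/-- Prime-perspectivity: up or down. -/
def PPersp (p q : L × L) : Prop := PPerspUp p q ∨ PPerspDn p q

/-- Prime-projectivity: the reflexive-transitive extension of prime-perspectivity. -/
def PProj : (L × L) → (L × L) → Prop := Relation.ReflTransGen PPersp

/-- `q` is collapsed by `con(p)`. -/
def Collapses (p q : L × L) : Prop := (conOf p.1 p.2).rel q.1 q.2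

/-- `I` is congruence-perspective up to `J`: `0_J ⊔ 1_I = 1_J` and `0_I ≤ 0_J`. -/
def CPerspUp (I J : L × L) : Prop := J.1 ⊔ I.2 = J.2 ∧ I.1 ≤ J.1

/-- `I` is congruence-perspective down to `J`: `1_J ⊓ 0_I = 0_J` and `1_J ≤ 1_I`. -/
def CPerspDn (I J : L × L) : Prop := J.2 ⊓ I.1 = J.1 ∧ J.2 ≤ I.2

/-- Congruence-perspectivity: up or down. -/
def CPersp (I J : L × L) : Prop := CPerspUp I J ∨ CPerspDn I J

/-- Congruence-projectivity: the reflexive-transitive extension of congruence-perspectivity. -/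
def CProj : (L × L) → (L × L) → Prop := Relation.ReflTransGen CPersp

/-! Every congruence collapsing an interval collapses its congruence-perspective images, which
gives one direction. Conversely, in a finite lattice the relation "every prime interval of
`[a ⊓ b, a ⊔ b]` is congruence-projective from `p`" is a congruence collapsing `p`, so it
contains `con(p)`. Its compatibility with `⊔` and `⊓` rests on one observation: if
`c ≤ x ⋖ y ≤ x ⊔ d`, peel covers `d' ⋖ d` off the top of `[c, d]` until `y ≰ x ⊔ d'`; then
`[x, y]` is perspective down from `[x ⊔ d', x ⊔ d]`, which is perspective up from `[d', d]`. -/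

lemma cProj_of_le_of_le_of_le {a b x y : L} (hax : a ≤ x) (hxy : x ≤ y) (hyb : y ≤ b) :
    CProj (a, b) (x, y) :=
  .tail (b := (a, y)) (.single (Or.inr ⟨inf_eq_right.2 (hax.trans hxy), hyb⟩))
    (Or.inl ⟨sup_eq_right.2 hxy, hax⟩)

lemma LatCon.rel_of_cPersp (θ : LatCon L) {I J : L × L} (hI : θ.rel I.1 I.2) (hIJ : CPersp I J) :
    θ.rel J.1 J.2 := by
  rcases hIJ with ⟨hsup, hle⟩ | ⟨hinf, hle⟩
  · simpa only [sup_eq_left.2 hle, hsup] using θ.sup_comp (θ.refl J.1) hI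
  · simpa only [hinf, inf_eq_left.2 hle] using θ.inf_comp (θ.refl J.2) hI

lemma collapses_of_cProj {p q : L × L} (h : CProj p q) : Collapses p q := by
  induction h with
  | refl => exact fun θ hθ => hθ
  | tail _ hstep ih => exact fun θ hθ => θ.rel_of_cPersp (ih θ hθ) hstep

def CProjCovers (p : L × L) (u v : L) : Prop :=
  ∀ ⦃x y : L⦄, u ≤ x → x ⋖ y → y ≤ v → CProj p (x, y)

namespace CProjCovers

variable {p : L × L} {c d u v w : L}

lemma mono (h : CProjCovers p u v) (hu : u ≤ c) (hv : d ≤ v) : CProjCovers p c d :=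
  fun _ _ hx hxy hy => h (hu.trans hx) hxy (hy.trans hv)

lemma of_cProj (h : CProj p (u, v)) : CProjCovers p u v :=
  fun _ _ hx hxy hy => h.trans (cProj_of_le_of_le_of_le hx hxy.le hy)

variable [Finite L]

lemma cProj_of_le_sup (h : CProjCovers p c d) (hcd : c ≤ d) {x y : L} (hxy : x ⋖ y)
    (hcx : c ≤ x) (hy : y ≤ x ⊔ d) : CProj p (x, y) := by
  induction d using WellFoundedLT.induction with
  | ind d ih =>
  have hcd' : c < d :=
    hcd.lt_of_ne fun h => hxy.lt.not_ge (by rwa [← h, sup_eq_left.2 hcx] at hy)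
  obtain ⟨d', hcd', hd'd⟩ := exists_le_covBy_of_lt hcd'
  by_cases hy' : y ≤ x ⊔ d'
  · exact ih d' hd'd.lt (h.mono le_rfl hd'd.le) hcd' hy'
  · have hdown : y ⊓ (x ⊔ d') = x :=
      (hxy.eq_or_eq (le_inf hxy.le le_sup_left) inf_le_left).resolve_right
        fun h => hy' (h ▸ inf_le_right)
    have hup : CPersp (d', d) (x ⊔ d', x ⊔ d) :=
      Or.inl ⟨by rw [sup_assoc, sup_eq_right.2 hd'd.le], le_sup_right⟩
    exact ((h hcd' hd'd le_rfl).tail hup).tail (Or.inr ⟨hdown, hy⟩)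


lemma cProj_of_inf_le (h : CProjCovers p c d) (hcd : c ≤ d) {x y : L} (hxy : x ⋖ y)
    (hyd : y ≤ d) (hx : y ⊓ c ≤ x) : CProj p (x, y) := by
  induction c using WellFoundedGT.induction with
  | ind c ih =>
  have hcd' : c < d :=
    hcd.lt_of_ne fun h => hxy.lt.not_ge (by rwa [h, inf_eq_left.2 hyd] at hx)
  obtain ⟨c', hcc', hc'd⟩ := exists_covBy_le_of_lt hcd'
  by_cases hx' : y ⊓ c' ≤ x
  · exact ih c' hcc'.lt (h.mono hcc'.le le_rfl) hc'd hx'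
  · have hup : x ⊔ y ⊓ c' = y :=
      (hxy.eq_or_eq le_sup_left (sup_le hxy.le inf_le_left)).resolve_left
        fun h => hx' (h ▸ le_sup_right)
    have hdown : CPersp (c, c') (y ⊓ c, y ⊓ c') :=
      Or.inr ⟨by rw [inf_assoc, inf_eq_right.2 hcc'.le], inf_le_right⟩
    exact ((h le_rfl hcc' hc'd).tail hdown).tail (Or.inl ⟨hup, hx⟩)

lemma sup_right (h : CProjCovers p c d) (hcd : c ≤ d) (w : L) :
    CProjCovers p (c ⊔ w) (d ⊔ w) := fun _ _ hx hxy hy =>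
  h.cProj_of_le_sup hcd hxy (le_sup_left.trans hx)
    (hy.trans (sup_le le_sup_right ((le_sup_right.trans hx).trans le_sup_left)))

lemma inf_right (h : CProjCovers p c d) (hcd : c ≤ d) (w : L) :
    CProjCovers p (c ⊓ w) (d ⊓ w) := fun _ _ hx hxy hy =>
  h.cProj_of_inf_le hcd hxy (hy.trans inf_le_left)
    ((le_inf inf_le_right (inf_le_left.trans (hy.trans inf_le_right))).trans hx)

lemma trans (huv : CProjCovers p u v) (hvw : CProjCovers p v w) (hu : u ≤ v) (hv : v ≤ w) :
    CProjCovers p u w := fun x y hx hxy hy => by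
  by_cases hyv : y ⊓ v ≤ x
  · exact hvw.cProj_of_inf_le hv hxy hy hyv
  · have hyx : x ⊔ y ⊓ v = y :=
      (hxy.eq_or_eq le_sup_left (sup_le hxy.le inf_le_left)).resolve_left
        fun h => hyv (h ▸ le_sup_right)
    exact huv.cProj_of_le_sup hu hxy hx (hyx ▸ sup_le_sup_left inf_le_right x)

end CProjCovers

section Finite

variable [Finite L]

def cProjCon (p : L × L) : LatCon L where
  rel a b := CProjCovers p (a ⊓ b) (a ⊔ b)
  refl a _ _ hx hxy hy := by
    rw [inf_idem] at hx
    rw [sup_idem] at hy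
    exact (hxy.lt.trans_le (hy.trans hx)).false.elim
  symm h := by rwa [inf_comm, sup_comm]
  trans {a b c} hab hbc := by
    have hlow : CProjCovers p (a ⊓ b ⊓ (b ⊓ c)) (b ⊓ c) :=
      (hab.inf_right inf_le_sup (b ⊓ c)).mono le_rfl
        (le_inf (inf_le_left.trans le_sup_right) le_rfl)
    have hhigh : CProjCovers p (b ⊔ c) (a ⊔ b ⊔ (b ⊔ c)) :=
      (hab.sup_right inf_le_sup (b ⊔ c)).mono
        (sup_le (inf_le_right.trans le_sup_left) le_rfl) le_rfl
    refine ((hlow.trans hbc inf_le_right inf_le_sup).trans hhigh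
      (inf_le_right.trans inf_le_sup) le_sup_right).mono ?_ ?_
    · exact le_inf (inf_le_left.trans inf_le_left) (inf_le_right.trans inf_le_right)
    · exact sup_le (le_sup_left.trans le_sup_left) (le_sup_right.trans le_sup_right)
  sup_comp {a b c d} hab hcd := by
    refine ((hab.sup_right inf_le_sup (c ⊓ d)).trans
      ((hcd.sup_right inf_le_sup (a ⊔ b)).mono (sup_comm _ _).le (sup_comm _ _).le)
      (sup_le_sup_right inf_le_sup _) (sup_le_sup_left inf_le_sup _)).mono ?_ ?_
    · exact sup_le (inf_le_inf le_sup_left le_sup_left) (inf_le_inf le_sup_right le_sup_right)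
    · exact (sup_sup_sup_comm a c b d).le
  inf_comp {a b c d} hab hcd := by
    refine (((hcd.inf_right inf_le_sup (a ⊓ b)).mono (inf_comm _ _).le (inf_comm _ _).le).trans
      (hab.inf_right inf_le_sup (c ⊔ d))
      (inf_le_inf_left _ inf_le_sup) (inf_le_inf_right _ inf_le_sup)).mono ?_ ?_
    · exact (inf_inf_inf_comm a b c d).le
    · exact le_inf (sup_le_sup inf_le_left inf_le_left) (sup_le_sup inf_le_right inf_le_right)

lemma cProjCon_rel_of_le {p : L × L} (hp : p.1 ≤ p.2) : (cProjCon p).rel p.1 p.2 := by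
  simpa only [cProjCon, inf_eq_left.2 hp, sup_eq_right.2 hp] using
    CProjCovers.of_cProj (p := p) (u := p.1) (v := p.2) .refl

lemma cProj_of_collapses {p q : L × L} (hp : p.1 ≤ p.2) (hq : q.1 ⋖ q.2) (h : Collapses p q) :
    CProj p q :=
  h (cProjCon p) (cProjCon_rel_of_le hp) inf_le_left hq le_sup_right

end Finite

theorem jakubik [Fintype L] (p q : L × L) (hp : IsPrimeInt p) (hq : IsPrimeInt q) :
    Collapses p q ↔ CProj p q :=
  ⟨cProj_of_collapses hp.le hq, collapses_of_cProj⟩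
end

section
/- Let L be a finite lattice, let I and J be intervals of L with I congruence-perspective up to J, and let b be a prime interval contained in J. Then there exists a prime interval a contained in I such that a is prime-projective to b. -/
universe u

variable {L : Type u} [Lattice L]

/-!
Let `b = [x, y]`. Since `y ≤ 1_J = 0_J ⊔ 1_I ≤ x ⊔ 1_I` but `y ≰ x = x ⊔ 0_I`, walking up from
`0_I` to `1_I` there is a prime interval `[w, v] ⊆ I` with `y ≤ x ⊔ v` and `y ≰ x ⊔ w`. Such a
`[w, v]` is prime-perspective up to `[x ⊔ w, x ⊔ w ⊔ y]`, which is prime-perspective down to `b`.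
-/

theorem exists_covBy_crossing_of_le {α : Type*} [PartialOrder α] [WellFoundedLT α]
    [IsStronglyCoatomic α] {P : α → Prop} {u t : α} (hut : u ≤ t)
    (hu : ¬ P u) (ht : P t) : ∃ w v, u ≤ w ∧ w ⋖ v ∧ v ≤ t ∧ ¬ P w ∧ P v := by
  obtain ⟨v, ⟨huv, hvt, hv⟩, hmin⟩ :=
    wellFounded_lt.has_min {v | u ≤ v ∧ v ≤ t ∧ P v} ⟨t, hut, le_rfl, ht⟩
  have huv : u < v := huv.lt_of_ne fun h => hu (h ▸ hv)
  obtain ⟨w, huw, hwv⟩ := exists_le_covBy_of_lt huv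
  exact ⟨w, v, huw, hwv, hvt, fun hw => hmin w ⟨huw, hwv.le.trans hvt, hw⟩ hwv.lt, hv⟩

variable {w v x y c d : L}

theorem pperspUp_of_covBy (hwv : w ⋖ v) (hwc : w ≤ c) (hvc : ¬ v ≤ c) (hd : d ≤ v ⊔ c) :
    PPerspUp (w, v) (c, d) := by
  refine ⟨hwc, ?_, hd⟩
  rcases hwv.eq_or_eq (le_inf hwv.le hwc) inf_le_left with h | h
  · exact h
  · exact absurd (h ▸ inf_le_right) hvc

theorem pperspDn_of_covBy (hxy : x ⋖ y) (hxc : x ≤ c) (hyc : ¬ y ≤ c) :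
    PPerspDn (c, c ⊔ y) (x, y) := by
  refine ⟨le_sup_right, rfl, ?_⟩
  rcases hxy.eq_or_eq (le_inf hxc hxy.le) inf_le_right with h | h
  · exact h.le
  · exact absurd (h ▸ inf_le_left) hyc

theorem pproj_of_covBy (hwv : w ⋖ v) (hxy : x ⋖ y) (hyv : y ≤ x ⊔ v) (hyw : ¬ y ≤ x ⊔ w) :
    PProj (w, v) (x, y) := by
  have hvxw : ¬ v ≤ x ⊔ w := fun h => hyw (hyv.trans (sup_le le_sup_left h))
  have hd : x ⊔ w ⊔ y ≤ v ⊔ (x ⊔ w) :=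
    calc x ⊔ w ⊔ y ≤ x ⊔ v := sup_le (sup_le_sup_left hwv.le x) hyv
      _ ≤ v ⊔ (x ⊔ w) := sup_le (le_sup_left.trans le_sup_right) le_sup_left
  have hup : PPerspUp (w, v) (x ⊔ w, x ⊔ w ⊔ y) := pperspUp_of_covBy hwv le_sup_right hvxw hd
  have hdn : PPerspDn (x ⊔ w, x ⊔ w ⊔ y) (x, y) := pperspDn_of_covBy hxy le_sup_left hyw
  exact .head (.inl hup) (.single (.inr hdn))

theorem cperspUp_exists_pproj [Fintype L] (I J : L × L) (hI : I.1 ≤ I.2)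
    (hIJ : CPerspUp I J) (b : L × L) (hb : IsPrimeInt b) (hb1 : J.1 ≤ b.1) (hb2 : b.2 ≤ J.2) :
    ∃ a : L × L, IsPrimeInt a ∧ I.1 ≤ a.1 ∧ a.2 ≤ I.2 ∧ PProj a b := by
  obtain ⟨hJ, hIJ1⟩ := hIJ
  obtain ⟨x, y⟩ := b
  have hbot : ¬ y ≤ x ⊔ I.1 := by
    rw [sup_eq_left.mpr (hIJ1.trans hb1)]
    exact hb.lt.not_ge
  have htop : y ≤ x ⊔ I.2 := hb2.trans (hJ ▸ sup_le_sup_right hb1 I.2)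
  obtain ⟨w, v, hIw, hwv, hvI, hyw, hyv⟩ :=
    exists_covBy_crossing_of_le (P := fun v => y ≤ x ⊔ v) hI hbot htop
  exact ⟨(w, v), hwv, hIw, hvI, pproj_of_covBy hwv hb hyv hyw⟩
end

section
/- (Prime-Projectivity Lemma) Let L be a finite lattice and let p and q be distinct prime intervals in L. Then q is collapsed by con(p) if and only if p is prime-projective to q, i.e., there exists a sequence of pairwise distinct prime intervals p = r_0, r_1, ..., r_n = q with r_i prime-perspective to r_{i+1} for each i. -/
universe u

variable {L : Type u} [Lattice L]

/-!
Fix a prime interval `p`. Relate `a` and `b` when both lie in an interval `[x, y]` admitting a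
maximal chain whose coverings are all prime-projective from `p` through prime intervals. If
`b ⋖ v` and `d` is any element, every covering of `[b ⊔ d, v ⊔ d]` is prime-perspective up from
`[b, v]` (dually for `⊓ d`), so this relation is a congruence. It collapses `p`, hence contains
`con(p)`, and restricted to a prime interval `q` the chain is `q` itself. Conversely every
congruence collapsing `r` collapses each prime-perspective image of `r`. Repetitions in a chain
of prime-perspectivities can be cut out.
-/

open Relation

theorem reflTransGen_covBy_of_forall {α : Type*} [PartialOrder α] [LocallyFiniteOrder α]
    {G : α → α → Prop} {s t : α} (hst : s ≤ t)
    (hG : ∀ w w', s ≤ w → w ⋖ w' → w' ≤ t → G w w') :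
    ReflTransGen (fun a b => a ⋖ b ∧ G a b) s t := by
  suffices ∀ a, s ≤ a → ReflTransGen (· ⋖ ·) a t → ReflTransGen (fun a b => a ⋖ b ∧ G a b) a t
    from this s le_rfl (le_iff_reflTransGen_covBy.mp hst)
  intro a hsa hat
  induction hat using ReflTransGen.head_induction_on with
  | refl => exact .refl
  | head hab hbt ih =>
    exact .head ⟨hab, hG _ _ hsa hab (le_iff_reflTransGen_covBy.mpr hbt)⟩ (ih (hsa.trans hab.le))

theorem CovBy.of_reflTransGen {α : Type*} [PartialOrder α] {G : α → α → Prop} {x y : α}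
    (hxy : x ⋖ y) (h : ReflTransGen (fun a b => a ⋖ b ∧ G a b) x y) : G x y := by
  rcases h.cases_head with rfl | ⟨z, ⟨hxz, hG⟩, hzy⟩
  · exact absurd hxy.lt (lt_irrefl x)
  · have hzy' : z ≤ y := by
      simpa only [reflTransGen_eq_self] using
        ReflTransGen.mono (p := (· ≤ ·)) (fun _ _ h => h.1.le) _ _ hzy
    obtain rfl := (hxy.eq_or_eq hxz.le hzy').resolve_left hxz.lt.ne'
    exact hG

theorem Relation.ReflTransGen.exists_injective_chain {α : Type*} {r : α → α → Prop} {a b : α}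
    (h : ReflTransGen r a b) :
    ∃ (n : ℕ) (f : Fin (n + 1) → α), Function.Injective f ∧ f 0 = a ∧ f (Fin.last n) = b ∧
      ∀ i : Fin n, r (f i.castSucc) (f i.succ) := by
  induction h with
  | refl =>
    exact ⟨0, fun _ => a, fun _ _ _ => Subsingleton.elim (α := Fin 1) _ _, rfl, rfl, Fin.elim0⟩
  | @tail b c _ hbc ih =>
    obtain ⟨n, f, hf, hf0, hfn, hr⟩ := ih
    by_cases hc : c ∈ Set.range f
    · obtain ⟨k, rfl⟩ := hc
      refine ⟨k, fun i => f (Fin.castLE k.isLt i), hf.comp (Fin.castLE_injective _), hf0, rfl,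
        fun i => ?_⟩
      exact hr ⟨i, by omega⟩
    · refine ⟨n + 1, Fin.snoc f c, Fin.snoc_injective_of_injective hf hc, ?_, by simp, ?_⟩
      · simpa using hf0
      · intro i
        induction i using Fin.lastCases with
        | last => simpa [hfn] using hbc
        | cast j => rw [Fin.succ_castSucc, Fin.snoc_castSucc, Fin.snoc_castSucc]; exact hr j

theorem pPerspUp_of_covBy {b v w w' : L} (hbv : b ⋖ v) (hbw : b ≤ w) (hww' : w ⋖ w')
    (hw' : w' ≤ v ⊔ w) : PPerspUp (b, v) (w, w') := by
  refine ⟨hbw, (hbv.eq_or_eq (le_inf hbv.le hbw) inf_le_left).resolve_right fun h => ?_, hw'⟩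
  have hvw : v ≤ w := h ▸ inf_le_right
  exact hww'.lt.not_ge (hw'.trans (sup_le hvw le_rfl))

theorem pPerspDn_of_covBy {b v w w' : L} (hbv : b ⋖ v) (hw'v : w' ≤ v) (hww' : w ⋖ w')
    (hw : b ⊓ w' ≤ w) : PPerspDn (b, v) (w, w') := by
  refine ⟨hw'v, (hbv.eq_or_eq le_sup_left (sup_le hbv.le hw'v)).resolve_left fun h => ?_, hw⟩
  have hw'b : w' ≤ b := h ▸ le_sup_right
  exact hww'.lt.not_ge ((le_inf hw'b le_rfl).trans hw)

theorem LatCon.rel_of_pPersp (θ : LatCon L) {r s : L × L} (hr : θ.rel r.1 r.2)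
    (hs : s.1 ≤ s.2) (hrs : PPersp r s) : θ.rel s.1 s.2 := by
  rcases hrs with ⟨h₁, -, h₃⟩ | ⟨h₁, -, h₃⟩
  · have h := θ.inf_comp (θ.sup_comp hr (θ.refl s.1)) (θ.refl s.2)
    rwa [sup_eq_right.mpr h₁, inf_eq_left.mpr hs, inf_eq_right.mpr h₃] at h
  · have h := θ.sup_comp (θ.inf_comp hr (θ.refl s.2)) (θ.refl s.1)
    rwa [inf_eq_right.mpr h₁, sup_eq_right.mpr h₃, sup_eq_left.mpr hs] at h

def PrimeProj (p : L × L) : L × L → Prop :=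
  ReflTransGen (fun r s => PPersp r s ∧ IsPrimeInt s) p

def CoverChain (p : L × L) : L → L → Prop :=
  ReflTransGen (fun a b => a ⋖ b ∧ PrimeProj p (a, b))

namespace CoverChain

variable [LocallyFiniteOrder L] {p : L × L} {x y x₂ y₂ a b : L}

theorem sup_const (h : CoverChain p x y) (d : L) : CoverChain p (x ⊔ d) (y ⊔ d) := by
  induction h with
  | refl => exact .refl
  | @tail b v _ hbv ih =>
    refine ih.trans (reflTransGen_covBy_of_forall (sup_le_sup_right hbv.1.le d) ?_)
    intro w w' hw hww' hw'
    have hbw : b ≤ w := le_sup_left.trans hw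
    have hdw : d ≤ w := le_sup_right.trans hw
    exact hbv.2.tail
      ⟨.inl (pPerspUp_of_covBy hbv.1 hbw hww' (hw'.trans (sup_le_sup_left hdw v))), hww'⟩

theorem inf_const (h : CoverChain p x y) (d : L) : CoverChain p (x ⊓ d) (y ⊓ d) := by
  induction h with
  | refl => exact .refl
  | @tail b v _ hbv ih =>
    refine ih.trans (reflTransGen_covBy_of_forall (inf_le_inf_right d hbv.1.le) ?_)
    intro w w' hw hww' hw'
    have hw'v : w' ≤ v := hw'.trans inf_le_left
    have hw'd : w' ≤ d := hw'.trans inf_le_right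
    exact hbv.2.tail
      ⟨.inr (pPerspDn_of_covBy hbv.1 hw'v hww' ((inf_le_inf_left b hw'd).trans hw)), hww'⟩

theorem sup (h : CoverChain p x y) (h₂ : CoverChain p x₂ y₂) :
    CoverChain p (x ⊔ x₂) (y ⊔ y₂) := by
  have h₂' := h₂.sup_const y
  rw [sup_comm x₂, sup_comm y₂] at h₂'
  exact (h.sup_const x₂).trans h₂'

theorem inf (h : CoverChain p x y) (h₂ : CoverChain p x₂ y₂) :
    CoverChain p (x ⊓ x₂) (y ⊓ y₂) := by
  have h₂' := h₂.inf_const y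
  rw [inf_comm x₂, inf_comm y₂] at h₂'
  exact (h.inf_const x₂).trans h₂'

theorem mono (h : CoverChain p x y) (hxa : x ≤ a) (hab : a ≤ b) (hby : b ≤ y) :
    CoverChain p a b := by
  have h' := (h.sup_const a).inf_const b
  rwa [sup_eq_right.mpr hxa, sup_eq_left.mpr (hab.trans hby), inf_eq_left.mpr hab,
    inf_eq_right.mpr hby] at h'

theorem inf_sup_of_le
    (h : CoverChain p x y) (h₂ : CoverChain p x₂ y₂) (hx₂ : x₂ ≤ y) (hx : x ≤ y₂) :
    CoverChain p (x ⊓ x₂) (y ⊔ y₂) := by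
  have h₁ := h.inf_const x₂
  have h₃ := h.sup_const y₂
  rw [inf_eq_right.mpr hx₂] at h₁
  rw [sup_eq_right.mpr hx] at h₃
  exact (h₁.trans h₂).trans h₃

end CoverChain

def coverChainCon [LocallyFiniteOrder L] (p : L × L) : LatCon L where
  rel a b := ∃ x y, CoverChain p x y ∧ a ∈ Set.Icc x y ∧ b ∈ Set.Icc x y
  refl a := ⟨a, a, .refl, ⟨le_rfl, le_rfl⟩, ⟨le_rfl, le_rfl⟩⟩
  symm := fun ⟨x, y, h, ha, hb⟩ => ⟨x, y, h, hb, ha⟩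
  trans := fun ⟨x, y, h, ha, hb⟩ ⟨x₂, y₂, h₂, hb₂, hc⟩ =>
    ⟨x ⊓ x₂, y ⊔ y₂, h.inf_sup_of_le h₂ (hb₂.1.trans hb.2) (hb.1.trans hb₂.2),
      ⟨inf_le_left.trans ha.1, ha.2.trans le_sup_left⟩,
      ⟨inf_le_right.trans hc.1, hc.2.trans le_sup_right⟩⟩
  sup_comp := fun ⟨x, y, h, ha, hb⟩ ⟨x₂, y₂, h₂, hc, hd⟩ =>
    ⟨x ⊔ x₂, y ⊔ y₂, h.sup h₂, ⟨sup_le_sup ha.1 hc.1, sup_le_sup ha.2 hc.2⟩,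
      ⟨sup_le_sup hb.1 hd.1, sup_le_sup hb.2 hd.2⟩⟩
  inf_comp := fun ⟨x, y, h, ha, hb⟩ ⟨x₂, y₂, h₂, hc, hd⟩ =>
    ⟨x ⊓ x₂, y ⊓ y₂, h.inf h₂, ⟨inf_le_inf ha.1 hc.1, inf_le_inf ha.2 hc.2⟩,
      ⟨inf_le_inf hb.1 hd.1, inf_le_inf hb.2 hd.2⟩⟩

theorem prime_projectivity_lemma_general [Fintype L] (p q : L × L) (hp : IsPrimeInt p)
    (hq : IsPrimeInt q) :
    Collapses p q ↔
      ∃ (n : ℕ) (r : Fin (n + 1) → L × L), Function.Injective r ∧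
        (∀ i, IsPrimeInt (r i)) ∧ r 0 = p ∧ r (Fin.last n) = q ∧
        ∀ i : Fin n, PPersp (r i.castSucc) (r i.succ) := by
  classical
  let := Fintype.toLocallyFiniteOrder (α := L)
  constructor
  · intro hpq
    have hp' : (coverChainCon p).rel p.1 p.2 :=
      ⟨p.1, p.2, .single ⟨hp, .refl⟩, ⟨le_rfl, hp.le⟩, ⟨hp.le, le_rfl⟩⟩
    obtain ⟨x, y, hxy, hq₁, hq₂⟩ := hpq (coverChainCon p) hp'
    have hproj : PrimeProj p q :=
      CovBy.of_reflTransGen (G := fun a b => PrimeProj p (a, b)) hq (hxy.mono hq₁.1 hq.le hq₂.2)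
    obtain ⟨n, r, hr, hr0, hrn, hstep⟩ := hproj.exists_injective_chain
    refine ⟨n, r, hr, fun i => ?_, hr0, hrn, fun i => (hstep i).1⟩
    cases i using Fin.cases with
    | zero => rwa [hr0]
    | succ i => exact (hstep i).2
  · rintro ⟨n, r, -, hr, hr0, hrn, hstep⟩ θ hθ
    have hcol : ∀ i, θ.rel (r i).1 (r i).2 :=
      Fin.induction (hr0 ▸ hθ) fun i hi => θ.rel_of_pPersp hi (hr _).le (hstep i)
    simpa [hrn] using hcol (Fin.last n)

theorem prime_projectivity_lemma [Fintype L] (p q : L × L) (hp : IsPrimeInt p)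
    (hq : IsPrimeInt q) (hne : p ≠ q) :
    Collapses p q ↔
      ∃ (n : ℕ) (r : Fin (n + 1) → L × L), Function.Injective r ∧
        (∀ i, IsPrimeInt (r i)) ∧ r 0 = p ∧ r (Fin.last n) = q ∧
        ∀ i : Fin n, PPersp (r i.castSucc) (r i.succ) :=
  prime_projectivity_lemma_general p q hp hq
end

section
/- Let L be a finite lattice and let p, q be prime intervals with p prime-perspective to q and p ≠ q. Then the four elements 0_p, 1_p, 0_q, 1_q generate a sublattice isomorphic to either the four-element Boolean lattice (when p and q are perspective) or the five-element nonmodular lattice N_5. -/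
universe u

variable {L : Type u} [Lattice L]

/-- `{e, a, b, c, t}` forms a pentagon (`N₅`) sublattice:
`e < a < t`, `e < b < c < t`, with `a` a complement of both `b` and `c`. -/
def IsN5 (e a b c t : L) : Prop :=
  e < a ∧ a < t ∧ e < b ∧ b < c ∧ c < t ∧
  a ⊓ b = e ∧ a ⊓ c = e ∧ a ⊔ b = t ∧ a ⊔ c = t

/-- `{e, a, b, t}` forms a sublattice isomorphic to the four-element Boolean lattice. -/
def IsBool4 (e a b t : L) : Prop :=
  a ⊓ b = e ∧ a ⊔ b = t ∧ ¬ a ≤ b ∧ ¬ b ≤ a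

/-- `{e, a, b, t}` is a covering square `C₂²`. -/
def IsCovSquare (e a b t : L) : Prop :=
  a ⊓ b = e ∧ a ⊔ b = t ∧ e ⋖ a ∧ e ⋖ b ∧ a ⋖ t ∧ b ⋖ t

/-- `{e, a, b, c, t}` forms a diamond (`M₃`) sublattice. -/
def IsM3 (e a b c t : L) : Prop :=
  a ⊓ b = e ∧ a ⊓ c = e ∧ b ⊓ c = e ∧ a ⊔ b = t ∧ a ⊔ c = t ∧ b ⊔ c = t ∧
  e < a ∧ e < b ∧ e < c ∧ a ≠ b ∧ a ≠ c ∧ b ≠ c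

/-- A lattice is slim if it contains no `M₃` sublattice. -/
def Slim (L : Type u) [Lattice L] : Prop := ¬ ∃ e a b c t : L, IsM3 e a b c t

/-- (Upper) semimodularity: `a ⊓ b ⋖ a` implies `b ⋖ a ⊔ b`. -/
def Semimodular (L : Type u) [Lattice L] : Prop := ∀ a b : L, a ⊓ b ⋖ a → b ⋖ a ⊔ b

/-- A planar diagram of a finite lattice: every element gets a position in the plane,
the vertical coordinate is strictly order-preserving, distinct elements get distinct
positions, and the straight-line edges of distinct covering pairs do not cross. -/
structure Diagram (L : Type u) [Lattice L] where
  x : L → ℚ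
  y : L → ℚ
  y_strictMono : ∀ {a b : L}, a < b → y a < y b
  inj : Function.Injective fun v => (x v, y v)
  planar : ∀ a b c d : L, a ⋖ b → c ⋖ d →
    (openSegment ℚ ((x a, y a) : ℚ × ℚ) (x b, y b) ∩
      openSegment ℚ ((x c, y c) : ℚ × ℚ) (x d, y d)).Nonempty → a = c ∧ b = d

/-- In the diagram `D`, the prime interval `p` swings to the prime interval `q`:
they share the same top, that top covers at least three elements, and `0_q` is
neither the left-most nor the right-most lower cover of the common top. -/
def Swing (D : Diagram L) (p q : L × L) : Prop :=
  p.2 = q.2 ∧ 3 ≤ Nat.card {z : L // z ⋖ p.2} ∧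
  (¬ ∀ z : L, z ⋖ p.2 → D.x q.1 ≤ D.x z) ∧ (¬ ∀ z : L, z ⋖ p.2 → D.x z ≤ D.x q.1)

/-- The conclusion of the Swing Lemma for prime intervals `p`, `q`: there are pairwise
distinct prime intervals `r = r₀, …, rₙ = q` with `p` perspective up to `r` and each
`rᵢ` perspective down to, or swinging to, `r_{i+1}`. -/
def SwingSeq (D : Diagram L) (p q : L × L) : Prop :=
  ∃ (n : ℕ) (r : Fin (n + 1) → L × L), Function.Injective r ∧
    (∀ i, IsPrimeInt (r i)) ∧ PerspUp p (r 0) ∧ r (Fin.last n) = q ∧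
    ∀ i : Fin n, PerspDn (r i.castSucc) (r i.succ) ∨ Swing D (r i.castSucc) (r i.succ)

/-- The Swing Lemma holds for the lattice `L` with planar diagram `D`. -/
def SwingLemmaHolds (L : Type u) [Lattice L] (D : Diagram L) : Prop :=
  ∀ p q : L × L, IsPrimeInt p → IsPrimeInt q → p ≠ q →
    (Collapses p q ↔ SwingSeq D p q)

/-- A corner of a finite lattice: a doubly irreducible element, distinct from the
extremes, whose unique upper cover covers exactly two elements and whose unique
lower cover is covered by exactly two elements. -/
def IsLatCorner (c : L) : Prop :=
  ¬ IsMin c ∧ ¬ IsMax c ∧ (∃! u : L, c ⋖ u) ∧ (∃! v : L, v ⋖ c) ∧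
  (∀ u : L, c ⋖ u → Nat.card {z : L // z ⋖ u} = 2) ∧
  (∀ v : L, v ⋖ c → Nat.card {z : L // v ⋖ z} = 2)

/-!
If `p` is prime-perspective up to `q`, then `1_p ⊓ 1_q` lies in the prime interval `p`. When it is
`1_p`, the intervals are perspective and `{0_p, 1_p, 0_q, 1_q}` is already a four-element Boolean
sublattice; when it is `0_p`, the element `1_p` is a common relative complement of `0_q < 1_q` in
`[0_p, 1_p ⊔ 0_q]`, so adjoining `1_p ⊔ 0_q` gives an `N₅`. Prime-perspectivity down is the same
statement in the order dual.
-/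

open OrderDual

theorem isSublattice_inf_sup_pair (a b : L) : IsSublattice ({a ⊓ b, a, b, a ⊔ b} : Set L) := by
  constructor <;> rintro x hx y hy <;>
    simp only [Set.mem_insert_iff, Set.mem_singleton_iff] at hx hy <;>
    rcases hx with rfl | rfl | rfl | rfl <;> rcases hy with rfl | rfl | rfl | rfl <;>
    simp [sup_comm, inf_comm]

theorem isSublattice_pentagon {a b c : L} (hbc : b ≤ c) (hinf : a ⊓ b = a ⊓ c)
    (hsup : a ⊔ b = a ⊔ c) : IsSublattice ({a ⊓ b, a, b, c, a ⊔ b} : Set L) := by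
  have h₁ : a ⊓ b ≤ c := inf_le_right.trans hbc
  have h₂ : c ≤ a ⊔ b := hsup ▸ le_sup_right
  have h₃ : c ⊓ a = a ⊓ b := by rw [inf_comm, hinf]
  have h₄ : c ⊔ a = a ⊔ b := by rw [sup_comm, hsup]
  have h₅ : b ⊓ a = a ⊓ b := inf_comm b a
  have h₆ : b ⊔ a = a ⊔ b := sup_comm b a
  constructor <;> rintro x hx y hy <;>
    simp only [Set.mem_insert_iff, Set.mem_singleton_iff] at hx hy <;>
    rcases hx with rfl | rfl | rfl | rfl | rfl <;> rcases hy with rfl | rfl | rfl | rfl | rfl <;>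
    simp [hbc, h₁, h₂, h₃, h₄, h₅, h₆, hinf.symm, hsup.symm]

theorem IsBool4.latticeClosure_eq {e a b t : L} (h : IsBool4 e a b t) :
    latticeClosure ({e, a, b, t} : Set L) = {e, a, b, t} := by
  obtain ⟨rfl, rfl, -, -⟩ := h
  exact (isSublattice_inf_sup_pair a b).latticeClosure_eq

theorem IsN5.latticeClosure_eq {e a b c t : L} (h : IsN5 e a b c t) :
    latticeClosure ({e, a, b, c, t} : Set L) = {e, a, b, c, t} := by
  obtain ⟨-, -, -, hbc, -, rfl, hac, rfl, hac'⟩ := h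
  exact (isSublattice_pentagon hbc.le hac.symm hac'.symm).latticeClosure_eq

theorem latticeClosure_insert_sup {s : Set L} {a b : L} (ha : a ∈ s) (hb : b ∈ s) :
    latticeClosure (insert (a ⊔ b) s) = latticeClosure s :=
  (latticeClosure_min (Set.insert_subset
      (isSublattice_latticeClosure.supClosed (subset_latticeClosure ha) (subset_latticeClosure hb))
      subset_latticeClosure) isSublattice_latticeClosure).antisymm
    (latticeClosure_mono (Set.subset_insert _ _))

theorem latticeClosure_insert_inf {s : Set L} {a b : L} (ha : a ∈ s) (hb : b ∈ s) :
    latticeClosure (insert (a ⊓ b) s) = latticeClosure s :=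
  (latticeClosure_min (Set.insert_subset
      (isSublattice_latticeClosure.infClosed (subset_latticeClosure ha) (subset_latticeClosure hb))
      subset_latticeClosure) isSublattice_latticeClosure).antisymm
    (latticeClosure_mono (Set.subset_insert _ _))

theorem PPerspUp.isBool4_or_isN5 {a b c d : L} (hab : a ⋖ b) (hcd : c ⋖ d)
    (hne : (a, b) ≠ (c, d)) (h : PPerspUp (a, b) (c, d)) :
    IsBool4 a b c d ∨ IsN5 a b c d (b ⊔ c) := by
  obtain ⟨hac, hbc, hd⟩ : a ≤ c ∧ b ⊓ c = a ∧ d ≤ b ⊔ c := h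
  rcases hab.eq_or_eq (le_inf hab.le (hac.trans hcd.le)) inf_le_left with hbd | hbd
  · have hncb : ¬ c ≤ b := fun hcb =>
      hcd.lt.not_ge ((hbd ▸ le_inf (hd.trans (sup_le le_rfl hcb)) le_rfl).trans hac)
    have hdt : d ≠ b ⊔ c := fun hdt =>
      hab.lt.ne' (hbd ▸ (inf_eq_left.2 (hdt ▸ le_sup_left)).symm)
    exact Or.inr ⟨hab.lt, left_lt_sup.2 hncb, hac.lt_of_ne fun hac_eq => hncb (hac_eq ▸ hab.le),
      hcd.lt, hd.lt_of_ne hdt, hbc, hbd, rfl,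
      le_antisymm (sup_le le_sup_left hd) (sup_le_sup_left hcd.le b)⟩
  · have hsup : b ⊔ c = d := le_antisymm (sup_le (inf_eq_left.1 hbd) hcd.le) hd
    refine Or.inl ⟨hbc, hsup, fun hb_le_c => hab.lt.ne' ?_, fun hcb => hne ?_⟩
    · rwa [inf_eq_left.2 hb_le_c] at hbc
    · rw [inf_eq_right.2 hcb] at hbc
      rw [sup_eq_left.2 hcb] at hsup
      rw [hbc, hsup]

theorem PPerspDn.isBool4_or_isN5 {a b c d : L} (hab : a ⋖ b) (hcd : c ⋖ d)
    (hne : (a, b) ≠ (c, d)) (h : PPerspDn (a, b) (c, d)) :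
    IsBool4 c a d b ∨ IsN5 (a ⊓ d) a c d b := by
  have hne' : (toDual b, toDual a) ≠ (toDual d, toDual c) := fun h' => hne (by simp_all)
  -- `PPerspDn` in `L` is `PPerspUp` in `Lᵒᵈ` with both intervals turned upside down.
  rcases PPerspUp.isBool4_or_isN5 hab.toDual hcd.toDual hne' h with
    ⟨h₁, h₂, h₃, h₄⟩ | ⟨h₁, h₂, h₃, h₄, h₅, h₆, h₇, -, h₉⟩
  · exact Or.inl ⟨h₂, h₁, h₄, h₃⟩
  · exact Or.inr ⟨h₂, h₁, h₅, h₄, h₃, h₉, rfl, h₇, h₆⟩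

theorem ppersp_generates_square_or_N5_general (p q : L × L)
    (hp : IsPrimeInt p) (hq : IsPrimeInt q) (hne : p ≠ q) (h : PPersp p q) :
    (Persp p q ∧ ∃ e a b t : L, IsBool4 e a b t ∧
        latticeClosure ({p.1, p.2, q.1, q.2} : Set L) = {e, a, b, t}) ∨
    (∃ e a b c t : L, IsN5 e a b c t ∧
        latticeClosure ({p.1, p.2, q.1, q.2} : Set L) = {e, a, b, c, t}) := by
  obtain ⟨a, b⟩ := p
  obtain ⟨c, d⟩ := q
  rcases h with h | h
  · rcases h.isBool4_or_isN5 hp hq hne with hB | hN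
    · exact Or.inl ⟨Or.inl ⟨hB.2.1, hB.1.symm⟩, a, b, c, d, hB, hB.latticeClosure_eq⟩
    · refine Or.inr ⟨a, b, c, d, b ⊔ c, hN, ?_⟩
      rw [← latticeClosure_insert_sup (a := b) (b := c) (by simp) (by simp), ← hN.latticeClosure_eq]
      exact congrArg latticeClosure
        (by ext; simp only [Set.mem_insert_iff, Set.mem_singleton_iff]; tauto)
  · rcases h.isBool4_or_isN5 hp hq hne with hB | hN
    · refine Or.inl ⟨Or.inr ⟨hB.1, hB.2.1⟩, c, a, d, b, hB, ?_⟩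
      rw [← hB.latticeClosure_eq]
      exact congrArg latticeClosure
        (by ext; simp only [Set.mem_insert_iff, Set.mem_singleton_iff]; tauto)
    · refine Or.inr ⟨a ⊓ d, a, c, d, b, hN, ?_⟩
      rw [← latticeClosure_insert_inf (a := a) (b := d) (by simp) (by simp), ← hN.latticeClosure_eq]
      exact congrArg latticeClosure
        (by ext; simp only [Set.mem_insert_iff, Set.mem_singleton_iff]; tauto)

theorem ppersp_generates_square_or_N5 [Fintype L] (p q : L × L)
    (hp : IsPrimeInt p) (hq : IsPrimeInt q) (hne : p ≠ q) (h : PPersp p q) :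
    (Persp p q ∧ ∃ e a b t : L, IsBool4 e a b t ∧
        latticeClosure ({p.1, p.2, q.1, q.2} : Set L) = {e, a, b, t}) ∨
    (∃ e a b c t : L, IsN5 e a b c t ∧
        latticeClosure ({p.1, p.2, q.1, q.2} : Set L) = {e, a, b, c, t}) :=
  ppersp_generates_square_or_N5_general p q hp hq hne h
end

section
/- Let L be a finite lattice and let p, q be prime intervals in L such that con(p) covers con(q) in the order of join-irreducible congruences of L. Then there exist a sublattice of L isomorphic to N_5 (or to the covering square C_2^2) and prime intervals p_0 and q_0 within it satisfying con(p) = con(p_0) and con(q) = con(q_0). -/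
universe u

variable {L : Type u} [Lattice L]

/-!
By the prime-projectivity lemma, `con(p)` collapses a prime interval `q` iff `q` is reached
from `p` by a chain of prime-perspectivities through prime intervals: in a finite lattice the
pairs `a, b` all of whose prime subintervals are reached from `p` form a congruence. Along such
a chain from `p` to `q` the principal congruences decrease and are join-irreducible, so by the
covering hypothesis each of them is `con(p)` or `con(q)`. Where the chain drops from `con(p)`
to `con(q)` we have a prime-perspectivity that is not a perspectivity, and its endpoints lie
in a pentagon.
-/

open OrderDual Relation

theorem Relation.ReflTransGen.exists_step_of_not {α : Type*} {r : α → α → Prop} {P : α → Prop}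
    {a b : α} (h : ReflTransGen r a b) (ha : P a) (hb : ¬ P b) :
    ∃ c d, r c d ∧ P c ∧ ¬ P d ∧ ReflTransGen r d b := by
  induction h using ReflTransGen.head_induction_on with
  | refl => exact absurd ha hb
  | @head a c hac hcb ih =>
    by_cases hc : P c
    · exact ih hc
    · exact ⟨a, c, hac, ha, hc, hcb⟩

namespace LatCon

theorem ext {α β : LatCon L} (h : α.rel = β.rel) : α = β := by
  cases α; cases β; cases h; rfl

theorem le_antisymm {α β : LatCon L} (h₁ : α.le β) (h₂ : β.le α) : α = β :=
  ext <| funext₂ fun a b => propext ⟨h₁ a b, h₂ a b⟩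

theorem rel_of_le_of_le {θ : LatCon L} {x y x' y' : L} (h : θ.rel x y)
    (hx : x ≤ x') (hxy : x' ≤ y') (hy : y' ≤ y) : θ.rel x' y' := by
  have h₁ := θ.inf_comp (θ.sup_comp h (θ.refl x')) (θ.refl y')
  rwa [sup_eq_right.2 hx, sup_eq_left.2 (hxy.trans hy), inf_eq_left.2 hxy,
    inf_eq_right.2 hy] at h₁

/-- The join of `α` and `β` realised as chains of `α`- and `β`-steps. -/
def chainJoin (α β : LatCon L) : LatCon L where
  rel := ReflTransGen fun a b => α.rel a b ∨ β.rel a b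
  refl _ := .refl
  symm h := ReflTransGen.mono (fun _ _ h => Or.imp α.symm β.symm h) _ _ (reflTransGen_swap.2 h)
  trans := ReflTransGen.trans
  sup_comp {_ b c _} h₁ h₂ :=
    (h₁.lift (· ⊔ c) fun _ _ h => h.imp (α.sup_comp · (α.refl c)) (β.sup_comp · (β.refl c))).trans
      (h₂.lift (b ⊔ ·) fun _ _ h => h.imp (α.sup_comp (α.refl b)) (β.sup_comp (β.refl b)))
  inf_comp {_ b c _} h₁ h₂ :=
    (h₁.lift (· ⊓ c) fun _ _ h => h.imp (α.inf_comp · (α.refl c)) (β.inf_comp · (β.refl c))).trans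
      (h₂.lift (b ⊓ ·) fun _ _ h => h.imp (α.inf_comp (α.refl b)) (β.inf_comp (β.refl b)))

theorem le_conJoin_left (α β : LatCon L) : α.le (conJoin α β) :=
  fun a b h _ hα _ => hα a b h

theorem le_conJoin_right (α β : LatCon L) : β.le (conJoin α β) :=
  fun a b h _ _ hβ => hβ a b h

theorem conJoin_le_chainJoin (α β : LatCon L) : (conJoin α β).le (chainJoin α β) :=
  fun _ _ h => h _ (fun _ _ h => ReflTransGen.single (.inl h))
    (fun _ _ h => ReflTransGen.single (.inr h))

end LatCon

theorem rel_conOf (x y : L) : (conOf x y).rel x y := fun _ h => h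

theorem conOf_le {x y : L} {θ : LatCon L} (h : θ.rel x y) : (conOf x y).le θ :=
  fun _ _ hab => hab θ h

/-- Along a chain from `u` to `v`, the map `z ↦ (z ⊔ u) ⊓ v` into `{u, v}` must jump from
`u` to `v` at a single `α`- or `β`-step. -/
theorem CovBy.conOf_joinIrreducible {u v : L} (h : u ⋖ v) : (conOf u v).JoinIrreducible := by
  refine ⟨fun e => h.ne (show conBot.rel u v from e ▸ rel_conOf u v), fun α β e => ?_⟩
  have hchain : ReflTransGen (fun a b => α.rel a b ∨ β.rel a b) u v :=
    LatCon.conJoin_le_chainJoin α β u v (e ▸ rel_conOf u v)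
  obtain ⟨a, b, hab, ha, hb_ne, -⟩ := hchain.exists_step_of_not (P := fun z => (z ⊔ u) ⊓ v = u)
    (by rw [sup_idem, inf_eq_left.2 h.le]) (by rw [sup_eq_left.2 h.le, inf_idem]; exact h.ne')
  have hb : (b ⊔ u) ⊓ v = v :=
    (h.eq_or_eq (le_inf le_sup_right h.le) inf_le_right).resolve_left hb_ne
  have eq_of_rel : ∀ θ : LatCon L, θ.rel a b → θ.le (conJoin α β) → conOf u v = θ := by
    intro θ hθ hle
    have huv := θ.inf_comp (θ.sup_comp hθ (θ.refl u)) (θ.refl v)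
    rw [ha, hb] at huv
    exact LatCon.le_antisymm (conOf_le huv) (e ▸ hle)
  exact hab.imp (eq_of_rel α · (LatCon.le_conJoin_left α β))
    (eq_of_rel β · (LatCon.le_conJoin_right α β))

def PrimePPersp (r s : L × L) : Prop := PPersp r s ∧ IsPrimeInt s

def PrimePProj : L × L → L × L → Prop := ReflTransGen PrimePPersp

theorem PPersp.rel {r s : L × L} (h : PPersp r s) (hs : s.1 ≤ s.2) {θ : LatCon L}
    (hr : θ.rel r.1 r.2) : θ.rel s.1 s.2 := by
  rcases h with ⟨h₁, -, h₃⟩ | ⟨h₁, -, h₃⟩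
  · have h₄ := θ.sup_comp hr (θ.refl s.1)
    rw [sup_eq_right.2 h₁] at h₄
    exact LatCon.rel_of_le_of_le h₄ le_rfl hs h₃
  · have h₄ := θ.inf_comp hr (θ.refl s.2)
    rw [inf_eq_right.2 h₁] at h₄
    exact LatCon.rel_of_le_of_le h₄ h₃ hs le_rfl

theorem PrimePProj.rel {r s : L × L} (h : PrimePProj r s) {θ : LatCon L}
    (hr : θ.rel r.1 r.2) : θ.rel s.1 s.2 := by
  induction h with
  | refl => exact hr
  | tail _ hstep ih => exact hstep.1.rel hstep.2.le ih

theorem PrimePProj.conOf_le {r s : L × L} (h : PrimePProj r s) :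
    (conOf s.1 s.2).le (conOf r.1 r.2) :=
  _root_.conOf_le (h.rel (rel_conOf _ _))

theorem PerspUp.conOf_eq {r s : L × L} (h : PerspUp r s) : conOf r.1 r.2 = conOf s.1 s.2 := by
  obtain ⟨h₁, h₂⟩ := h
  have up : PPerspUp r s := ⟨h₂ ▸ inf_le_right, h₂.symm, h₁.ge⟩
  have down : PPerspDn s r :=
    ⟨le_sup_left.trans h₁.le, by rw [sup_comm, h₁], ((inf_comm s.1 r.2).trans h₂.symm).le⟩
  exact LatCon.le_antisymm
    (conOf_le (PPersp.rel (.inr down) (h₂ ▸ inf_le_left) (rel_conOf s.1 s.2)))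
    (conOf_le (PPersp.rel (.inl up) (le_sup_right.trans h₁.le) (rel_conOf r.1 r.2)))

theorem PerspDn.perspUp_symm {r s : L × L} (h : PerspDn r s) : PerspUp s r :=
  ⟨by rw [sup_comm, h.2], by rw [inf_comm, h.1]⟩

def intervalDual (p : L × L) : Lᵒᵈ × Lᵒᵈ := (toDual p.2, toDual p.1)

theorem primePPersp_intervalDual_iff {r s : L × L} :
    PrimePPersp (intervalDual r) (intervalDual s) ↔ PrimePPersp r s :=
  and_congr Or.comm toDual_covBy_toDual_iff

theorem primePProj_intervalDual_iff {r s : L × L} :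
    PrimePProj (intervalDual r) (intervalDual s) ↔ PrimePProj r s :=
  ⟨fun h => ReflTransGen.lift intervalDual (fun _ _ h => primePPersp_intervalDual_iff.2 h) _ _ h,
    fun h => ReflTransGen.lift intervalDual (fun _ _ h => primePPersp_intervalDual_iff.2 h) _ _ h⟩

def PrimeProjIcc (p : L × L) (x y : L) : Prop :=
  ∀ u v, x ≤ u → u ⋖ v → v ≤ y → PrimePProj p (u, v)

theorem PrimeProjIcc.mono {p : L × L} {x y x' y' : L} (h : PrimeProjIcc p x y) (hx : x ≤ x')
    (hy : y' ≤ y) : PrimeProjIcc p x' y' :=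
  fun u v hu huv hv => h u v (hx.trans hu) huv (hv.trans hy)

theorem PrimeProjIcc.dual {p : L × L} {x y : L} (h : PrimeProjIcc p x y) :
    PrimeProjIcc (intervalDual p) (toDual y) (toDual x) :=
  fun u v hu huv hv => primePProj_intervalDual_iff.2 (h (ofDual v) (ofDual u) hv
    (toDual_covBy_toDual_iff.1 huv) hu)

theorem CovBy.primePProj_of_not_le_sup [Finite L] {c y u v : L} (hcy : c ⋖ y) (huv : u ⋖ v)
    (hv : v ≤ y ⊔ u) (hvc : ¬ v ≤ c ⊔ u) : PrimePProj (c, y) (u, v) := by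
  obtain ⟨s, hs, hst⟩ := exists_le_covBy_of_lt (left_lt_sup.2 hvc)
  have hus : u ≤ s := le_sup_right.trans hs
  have hvs : ¬ v ≤ s := fun hvs => hst.lt.not_ge (sup_le hs hvs)
  have hys : ¬ y ≤ s := fun hys => hvs (hv.trans (sup_le hys hus))
  have up : PPerspUp (c, y) (s, c ⊔ u ⊔ v) :=
    ⟨le_sup_left.trans hs,
      (hcy.eq_or_eq (le_inf hcy.le (le_sup_left.trans hs)) inf_le_left).resolve_right
        fun e => hys (inf_eq_left.1 e),
      sup_le (sup_le (hcy.le.trans le_sup_left) (hus.trans le_sup_right))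
        (hv.trans (sup_le_sup_left hus y))⟩
  have down : PPerspDn (s, c ⊔ u ⊔ v) (u, v) :=
    ⟨le_sup_right,
      (hst.eq_or_eq le_sup_left (sup_le hst.le le_sup_right)).resolve_left
        fun e => hvs (sup_eq_left.1 e),
      ((huv.eq_or_eq (le_inf hus huv.le) inf_le_right).resolve_right
        fun e => hvs (inf_eq_right.1 e)).le⟩
  exact .tail (.single ⟨.inl up, hst⟩) ⟨.inr down, huv⟩

theorem PrimeProjIcc.primePProj_of_le_sup [Finite L] {p : L × L} {x y u v : L}
    (h : PrimeProjIcc p x y) (hxy : x ≤ y) (hxu : x ≤ u) (huv : u ⋖ v) (hv : v ≤ y ⊔ u) :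
    PrimePProj p (u, v) := by
  induction y using WellFoundedLT.induction with
  | _ y ih =>
  rcases hxy.lt_or_eq with hlt | rfl
  · obtain ⟨c, hxc, hcy⟩ := exists_le_covBy_of_lt hlt
    by_cases hvc : v ≤ c ⊔ u
    · exact ih c hcy.lt (h.mono le_rfl hcy.le) hxc hvc
    · exact (h c y hxc hcy le_rfl).trans (hcy.primePProj_of_not_le_sup huv hv hvc)
  · exact absurd (hv.trans (sup_le hxu le_rfl)) huv.lt.not_ge

theorem PrimeProjIcc.primePProj_of_inf_le [Finite L] {p : L × L} {x y u v : L}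
    (h : PrimeProjIcc p x y) (hxy : x ≤ y) (hvy : v ≤ y) (huv : u ⋖ v) (hu : x ⊓ v ≤ u) :
    PrimePProj p (u, v) :=
  primePProj_intervalDual_iff.1 <| h.dual.primePProj_of_le_sup (toDual_le_toDual.2 hxy)
    (toDual_le_toDual.2 hvy) (toDual_covBy_toDual_iff.2 huv) hu

namespace PrimeProjIcc

variable [Finite L] {p : L × L} {x y z : L}

theorem sup_right (h : PrimeProjIcc p x y) (hxy : x ≤ y) (w : L) :
    PrimeProjIcc p (x ⊔ w) (y ⊔ w) :=
  fun _ _ hu huv hv => h.primePProj_of_le_sup hxy (le_sup_left.trans hu) huv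
    (hv.trans (sup_le_sup_left (le_sup_right.trans hu) y))

theorem inf_right (h : PrimeProjIcc p x y) (hxy : x ≤ y) (w : L) :
    PrimeProjIcc p (x ⊓ w) (y ⊓ w) :=
  fun _ _ hu huv hv => h.primePProj_of_inf_le hxy (hv.trans inf_le_left) huv
    ((inf_le_inf_left x (hv.trans inf_le_right)).trans hu)

theorem trans (h₁ : PrimeProjIcc p x y) (h₂ : PrimeProjIcc p y z) (hxy : x ≤ y) (hyz : y ≤ z) :
    PrimeProjIcc p x z := by
  intro u v hu huv hv
  by_cases hvy : v ≤ y ⊔ u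
  · exact h₁.primePProj_of_le_sup hxy hu huv hvy
  · have hu' : (y ⊔ u) ⊓ v = u :=
      (huv.eq_or_eq (le_inf le_sup_right huv.le) inf_le_right).resolve_right
        fun e => hvy (inf_eq_right.1 e)
    exact h₂.primePProj_of_inf_le hyz hv huv (hu' ▸ inf_le_inf_right v le_sup_left)

theorem rel_trans {a b c : L} (h₁ : PrimeProjIcc p (a ⊓ b) (a ⊔ b))
    (h₂ : PrimeProjIcc p (b ⊓ c) (b ⊔ c)) : PrimeProjIcc p (a ⊓ c) (a ⊔ c) := by
  have down : PrimeProjIcc p (b ⊓ c ⊓ a) a :=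
    ((h₂.mono le_rfl le_sup_left).inf_right inf_le_left a).trans
      (h₁.mono (inf_comm a b).le le_sup_left) (inf_le_inf_right a inf_le_left) inf_le_right
  have up : PrimeProjIcc p a (b ⊔ c ⊔ a) :=
    (h₁.mono inf_le_left le_rfl).trans
      (((h₂.mono inf_le_left le_rfl).sup_right le_sup_left a).mono (sup_comm b a).le le_rfl)
      le_sup_left (sup_comm a b ▸ sup_le_sup_right le_sup_left a)
  exact (down.trans up inf_le_right le_sup_right).mono
    (le_inf (inf_le_right) (inf_le_left.trans inf_le_right))
    (sup_le le_sup_right (le_sup_right.trans le_sup_left))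

theorem rel_sup_right {a b : L} (h : PrimeProjIcc p (a ⊓ b) (a ⊔ b)) (c : L) :
    PrimeProjIcc p ((a ⊔ c) ⊓ (b ⊔ c)) ((a ⊔ c) ⊔ (b ⊔ c)) :=
  (h.sup_right inf_le_sup c).mono (le_inf (sup_le_sup_right inf_le_left c)
    (sup_le_sup_right inf_le_right c)) (sup_le (sup_le_sup_right le_sup_left c)
    (sup_le_sup_right le_sup_right c))

theorem rel_inf_right {a b : L} (h : PrimeProjIcc p (a ⊓ b) (a ⊔ b)) (c : L) :
    PrimeProjIcc p ((a ⊓ c) ⊓ (b ⊓ c)) ((a ⊓ c) ⊔ (b ⊓ c)) :=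
  (h.inf_right inf_le_sup c).mono (le_inf (inf_le_inf_right c inf_le_left)
    (inf_le_inf_right c inf_le_right)) (sup_le (inf_le_inf_right c le_sup_left)
    (inf_le_inf_right c le_sup_right))

end PrimeProjIcc

def primePProjCon [Finite L] (p : L × L) : LatCon L where
  rel a b := PrimeProjIcc p (a ⊓ b) (a ⊔ b)
  refl a u v hu huv hv := by
    rw [inf_idem] at hu
    rw [sup_idem] at hv
    exact absurd (hv.trans hu) huv.lt.not_ge
  symm h := by rwa [inf_comm, sup_comm]
  trans h₁ h₂ := h₁.rel_trans h₂
  sup_comp {_ b c _} h₁ h₂ :=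
    (h₁.rel_sup_right c).rel_trans (by simpa only [sup_comm b] using h₂.rel_sup_right b)
  inf_comp {_ b c _} h₁ h₂ :=
    (h₁.rel_inf_right c).rel_trans (by simpa only [inf_comm b] using h₂.rel_inf_right b)

theorem primePProj_of_rel_conOf [Finite L] {p q : L × L} (hp : IsPrimeInt p)
    (hq : IsPrimeInt q) (h : (conOf p.1 p.2).rel q.1 q.2) : PrimePProj p q := by
  have hpp : (primePProjCon p).rel p.1 p.2 := by
    intro u v hu huv hv
    rw [inf_eq_left.2 hp.le] at hu
    rw [sup_eq_right.2 hp.le] at hv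
    obtain rfl : u = p.1 := (hp.eq_or_eq hu (huv.le.trans hv)).resolve_right
      fun e => huv.lt.not_ge (hv.trans e.ge)
    obtain rfl : v = p.2 := (hp.eq_or_eq huv.le hv).resolve_left fun e => huv.lt.ne' e
    exact .refl
  exact h _ hpp q.1 q.2 inf_le_left hq le_sup_right

theorem IsN5.ofDual {e a b c t : L}
    (h : IsN5 (toDual t) (toDual a) (toDual c) (toDual b) (toDual e)) : IsN5 e a b c t :=
  let ⟨hta, hae, htc, hcb, hbe, hac, hab, hac', hab'⟩ := h
  ⟨hae, hta, hbe, hcb, htc, hab', hac', hab, hac⟩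

theorem isN5_of_pPerspUp {a b c d : L} (hab : a ⋖ b) (hcd : c ⋖ d)
    (h : PPerspUp (a, b) (c, d)) (hne : ¬ PerspUp (a, b) (c, d)) : IsN5 a b c d (b ⊔ c) := by
  obtain ⟨hac, hbc, hdt⟩ : a ≤ c ∧ b ⊓ c = a ∧ d ≤ b ⊔ c := h
  have hdt : d < b ⊔ c := lt_of_le_of_ne hdt fun e => hne ⟨e.symm, hbc.symm⟩
  have hbd : b ⊓ d = a :=
    (hab.eq_or_eq (le_inf hab.le (hac.trans hcd.le)) inf_le_left).resolve_right fun e =>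
      hdt.not_ge (sup_le (inf_eq_left.1 e) hcd.le)
  have hcb : ¬ c ≤ b := by
    intro hcb
    have hdb : d ≤ b := hdt.le.trans (sup_eq_left.2 hcb).le
    rw [inf_eq_right.2 hcb] at hbc
    rw [inf_eq_right.2 hdb, ← hbc] at hbd
    exact hcd.ne hbd.symm
  refine ⟨hab.lt, left_lt_sup.2 hcb, lt_of_le_of_ne hac fun e => hcb (e ▸ hab.le), hcd.lt, hdt,
    hbc, hbd, rfl, ?_⟩
  exact le_antisymm (sup_le le_sup_left hdt.le) (sup_le_sup_left hcd.le b)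

theorem isN5_of_pPerspDn {a b c d : L} (hab : a ⋖ b) (hcd : c ⋖ d)
    (h : PPerspDn (a, b) (c, d)) (hne : ¬ PerspDn (a, b) (c, d)) : IsN5 (a ⊓ d) a c d b :=
  IsN5.ofDual <| isN5_of_pPerspUp (L := Lᵒᵈ) (toDual_covBy_toDual_iff.2 hab)
    (toDual_covBy_toDual_iff.2 hcd) h fun h' => hne ⟨h'.1, h'.2.symm⟩

/-- A prime-perspectivity that changes the congruence cannot be a perspectivity. -/
theorem PPersp.exists_isN5 {r s : L × L} (hr : IsPrimeInt r) (hs : IsPrimeInt s)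
    (h : PPersp r s) (hne : conOf r.1 r.2 ≠ conOf s.1 s.2) :
    ∃ e a b c t : L, IsN5 e a b c t ∧ ({r.1, r.2, s.1, s.2} : Set L) ⊆ {e, a, b, c, t} := by
  obtain ⟨a, b⟩ := r
  obtain ⟨c, d⟩ := s
  rcases h with h | h
  · refine ⟨_, _, _, _, _, isN5_of_pPerspUp hr hs h fun h' => hne h'.conOf_eq, ?_⟩
    intro x hx
    simp only [Set.mem_insert_iff, Set.mem_singleton_iff] at hx ⊢
    tauto
  · refine ⟨_, _, _, _, _,
      isN5_of_pPerspDn hr hs h fun h' => hne h'.perspUp_symm.conOf_eq.symm, ?_⟩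
    intro x hx
    simp only [Set.mem_insert_iff, Set.mem_singleton_iff] at hx ⊢
    tauto

theorem conOf_cover_N5_or_square_general [Fintype L] (p q : L × L)
    (hp : IsPrimeInt p) (hq : IsPrimeInt q)
    (hle : (conOf q.1 q.2).le (conOf p.1 p.2))
    (hne : conOf q.1 q.2 ≠ conOf p.1 p.2)
    (hcov : ∀ θ : LatCon L, θ.JoinIrreducible → (conOf q.1 q.2).le θ →
      θ.le (conOf p.1 p.2) → θ = conOf q.1 q.2 ∨ θ = conOf p.1 p.2) :
    ∃ p₀ q₀ : L × L, IsPrimeInt p₀ ∧ IsPrimeInt q₀ ∧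
      conOf p₀.1 p₀.2 = conOf p.1 p.2 ∧ conOf q₀.1 q₀.2 = conOf q.1 q.2 ∧
      ((∃ e a b c t : L, IsN5 e a b c t ∧
          ({p₀.1, p₀.2, q₀.1, q₀.2} : Set L) ⊆ {e, a, b, c, t}) ∨
       (∃ e a b t : L, IsCovSquare e a b t ∧
          ({p₀.1, p₀.2, q₀.1, q₀.2} : Set L) ⊆ {e, a, b, t})) := by
  have hpq : PrimePProj p q := primePProj_of_rel_conOf hp hq (hle q.1 q.2 (rel_conOf q.1 q.2))
  -- the first step of the chain `p → … → q` at which the congruence drops below `con(p)`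
  obtain ⟨r, s, ⟨hrs, hs⟩, ⟨hr, hr_eq⟩, hs_ne, hsq⟩ :=
    hpq.exists_step_of_not (P := fun t => IsPrimeInt t ∧ conOf t.1 t.2 = conOf p.1 p.2)
      ⟨hp, rfl⟩ fun h => hne h.2
  replace hs_ne : conOf s.1 s.2 ≠ conOf p.1 p.2 := fun e => hs_ne ⟨hs, e⟩
  have hsr : (conOf s.1 s.2).le (conOf r.1 r.2) := conOf_le (hrs.rel hs.le (rel_conOf r.1 r.2))
  have hs_eq : conOf s.1 s.2 = conOf q.1 q.2 := (hcov _ (CovBy.conOf_joinIrreducible hs)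
    (PrimePProj.conOf_le hsq) (hr_eq ▸ hsr)).resolve_right hs_ne
  obtain ⟨e, a, b, c, t, hN5, hsub⟩ := hrs.exists_isN5 hr hs (hr_eq ▸ hs_ne.symm)
  exact ⟨r, s, hr, hs, hr_eq, hs_eq, .inl ⟨e, a, b, c, t, hN5, hsub⟩⟩

theorem conOf_cover_N5_or_square [Fintype L] (p q : L × L)
    (hp : IsPrimeInt p) (hq : IsPrimeInt q)
    (hle : (conOf q.1 q.2).le (conOf p.1 p.2))
    (hne : conOf q.1 q.2 ≠ conOf p.1 p.2)
    (hji_p : (conOf p.1 p.2).JoinIrreducible) (hji_q : (conOf q.1 q.2).JoinIrreducible)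
    (hcov : ∀ θ : LatCon L, θ.JoinIrreducible → (conOf q.1 q.2).le θ →
      θ.le (conOf p.1 p.2) → θ = conOf q.1 q.2 ∨ θ = conOf p.1 p.2) :
    ∃ p₀ q₀ : L × L, IsPrimeInt p₀ ∧ IsPrimeInt q₀ ∧
      conOf p₀.1 p₀.2 = conOf p.1 p.2 ∧ conOf q₀.1 q₀.2 = conOf q.1 q.2 ∧
      ((∃ e a b c t : L, IsN5 e a b c t ∧
          ({p₀.1, p₀.2, q₀.1, q₀.2} : Set L) ⊆ {e, a, b, c, t}) ∨
       (∃ e a b t : L, IsCovSquare e a b t ∧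
          ({p₀.1, p₀.2, q₀.1, q₀.2} : Set L) ⊆ {e, a, b, t})) :=
  conOf_cover_N5_or_square_general p q hp hq hle hne hcov
end

section
/- Let L be an SPS lattice, let c be a corner of L, and set L' = L \ {c}, a sublattice of L. If the Swing Lemma holds for L, then the Swing Lemma holds for L'. -/
universe u

variable {L : Type u} [Lattice L]

/-!
Let `b ⋖ c ⋖ t` be the covers of the corner `c`. Semimodularity completes them to a covering
square `b ⋖ c, d ⋖ t`, and since `c` is doubly irreducible, `L' = L \ {c}` has exactly the
covering pairs of `L` between its elements.

A swing sequence is a perspectivity up followed by a walk of steps "perspective down or swing",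
and every such walk can be shortened to one without repetitions. No swing happens at `c` or `t`,
which cover fewer than three elements; so a walk in `L` never leaves `[b, c]` and enters `[c, t]`
only from `[c, t]` itself. Between prime intervals of `L'` it therefore stays in `L'`, except that
it may start at `[c, t]`, where `[b, d]` can take its place. Hence `L` and `L'` have the same swing
sequences between prime intervals of `L'`.

Restricting congruences shows that whatever `con(p)` collapses in `L'`, it collapses in `L`.
Conversely every congruence `θ` of `L'` extends to `L`: `c` joins the class of `b` if `θ`
collapses `[d, t]`, the class of `t` if it collapses `[b, d]`, and stays alone otherwise.
-/

open Function Relation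

section RelPath

variable {α : Type*} {R : α → α → Prop} {a b : α}

def IsRelPath (R : α → α → Prop) (a b : α) {n : ℕ} (r : Fin (n + 1) → α) : Prop :=
  Injective r ∧ r 0 = a ∧ r (Fin.last n) = b ∧ ∀ i : Fin n, R (r i.castSucc) (r i.succ)

theorem reflTransGen_of_chain {n : ℕ} {r : Fin (n + 1) → α}
    (h : ∀ i : Fin n, R (r i.castSucc) (r i.succ)) : ReflTransGen R (r 0) (r (Fin.last n)) := by
  induction n with
  | zero => exact .refl
  | succ n ih =>
    simpa using (ih (r := fun i => r i.castSucc) fun i => h i.castSucc).tail (h (Fin.last n))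

theorem IsRelPath.drop {n : ℕ} {r : Fin (n + 1) → α} (h : IsRelPath R a b r) (k : Fin (n + 1)) :
    IsRelPath R (r k) b fun i : Fin (n - k + 1) => r ⟨k + i, by omega⟩ := by
  obtain ⟨hinj, -, rfl, hstep⟩ := h
  refine ⟨fun i j hij => Fin.ext ?_, congrArg r (Fin.ext ?_), congrArg r (Fin.ext ?_),
    fun i => hstep ⟨k + i, by omega⟩⟩
  · simpa using hinj hij
  · simp
  · simp only [Fin.val_last]; omega

theorem IsRelPath.cons {c : α} {n : ℕ} {r : Fin (n + 1) → α} (h : IsRelPath R c b r)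
    (hac : R a c) (ha : a ∉ Set.range r) : IsRelPath R a b (Fin.cons a r : Fin (n + 2) → α) := by
  obtain ⟨hinj, rfl, rfl, hstep⟩ := h
  refine ⟨Fin.cons_injective_iff.2 ⟨ha, hinj⟩, rfl, rfl, Fin.cases hac fun i => ?_⟩
  simpa [← Fin.succ_castSucc] using hstep i

theorem Relation.ReflTransGen.exists_isRelPath (h : ReflTransGen R a b) :
    ∃ (n : ℕ) (r : Fin (n + 1) → α), IsRelPath R a b r := by
  induction h using ReflTransGen.head_induction_on with
  | refl => exact ⟨0, fun _ => b, fun i j _ => Subsingleton.elim (α := Fin 1) i j, rfl, rfl,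
      Fin.elim0⟩
  | @head a c hac _ ih =>
    obtain ⟨n, r, hr⟩ := ih
    by_cases ha : a ∈ Set.range r
    · obtain ⟨k, rfl⟩ := ha
      exact ⟨_, _, hr.drop k⟩
    · exact ⟨_, _, hr.cons hac ha⟩

end RelPath

theorem natCard_le_two_of_forall_eq_or_eq {α : Type*} {P : α → Prop} {x y : α}
    (h : ∀ z, P z → z = x ∨ z = y) : Nat.card {z // P z} ≤ 2 :=
  calc Nat.card {z // P z} = Set.ncard {z | P z} := Nat.card_coe_set_eq _
    _ ≤ Set.ncard {x, y} := Set.ncard_le_ncard h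
    _ ≤ 2 := (Set.ncard_insert_le x {y}).trans (by simp)

theorem eq_or_eq_of_natCard_eq_two {α : Type*} {P : α → Prop} (h : Nat.card {z // P z} = 2)
    {x y z : α} (hx : P x) (hy : P y) (hxy : x ≠ y) (hz : P z) : z = x ∨ z = y := by
  obtain ⟨w, -, hw⟩ := (Nat.card_eq_two_iff' (⟨x, hx⟩ : {z // P z})).1 h
  by_contra! hzxy
  have hyw := hw ⟨y, hy⟩ fun h => hxy (congrArg Subtype.val h).symm
  have hzw := hw ⟨z, hz⟩ fun h => hzxy.1 (congrArg Subtype.val h)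
  exact hzxy.2 (congrArg Subtype.val (hzw.trans hyw.symm))

def SwingStep (D : Diagram L) (p q : L × L) : Prop :=
  IsPrimeInt q ∧ (PerspDn p q ∨ Swing D p q)

theorem swingSeq_iff_reflTransGen {D : Diagram L} {p q : L × L} :
    SwingSeq D p q ↔ ∃ r₀, IsPrimeInt r₀ ∧ PerspUp p r₀ ∧ ReflTransGen (SwingStep D) r₀ q := by
  constructor
  · rintro ⟨n, r, -, hprime, hup, rfl, hstep⟩
    exact ⟨r 0, hprime 0, hup, reflTransGen_of_chain fun i => ⟨hprime _, hstep i⟩⟩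
  · rintro ⟨r₀, hr₀, hup, hwalk⟩
    obtain ⟨n, r, hinj, rfl, hlast, hstep⟩ := hwalk.exists_isRelPath
    exact ⟨n, r, hinj, fun i => Fin.cases hr₀ (fun j => (hstep j).1) i, hup, hlast,
      fun i => (hstep i).2⟩

/-- `c` is the corner, `b ⋖ c ⋖ t`, and `d` is the other element of the covering square. -/
structure IsCornerSquare (c b t d : L) : Prop where
  bot_covBy : b ⋖ c
  covBy_top : c ⋖ t
  bot_covBy_twin : b ⋖ d
  twin_covBy_top : d ⋖ t
  twin_ne : d ≠ c
  eq_bot_of_covBy : ∀ z, z ⋖ c → z = b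
  eq_top_of_covBy : ∀ z, c ⋖ z → z = t
  eq_or_eq_of_covBy_top : ∀ z, z ⋖ t → z = c ∨ z = d
  eq_or_eq_of_bot_covBy : ∀ z, b ⋖ z → z = c ∨ z = d

theorem IsLatCorner.exists_isCornerSquare [IsStronglyCoatomic L] (hsm : Semimodular L) {c : L}
    (hc : IsLatCorner c) : ∃ b t d, IsCornerSquare c b t d := by
  obtain ⟨-, -, ⟨t, hct, ht⟩, ⟨b, hbc, hb⟩, htwo, hbtwo⟩ := hc
  obtain ⟨⟨d, hbd⟩, hdc, -⟩ := (Nat.card_eq_two_iff' (⟨c, hbc⟩ : {z // b ⋖ z})).1 (hbtwo b hbc)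
  replace hdc : d ≠ c := fun h => hdc (Subtype.ext h)
  have hcd : c ⊓ d = b := by
    refine le_antisymm ?_ (le_inf hbc.le hbd.le)
    have hlt : c ⊓ d < c := inf_le_left.lt_of_ne fun h =>
      hbd.2 hbc.lt ((inf_eq_left.1 h).lt_of_ne hdc.symm)
    obtain ⟨z, hz, hzc⟩ := exists_le_covBy_of_lt hlt
    exact hb z hzc ▸ hz
  have htop : c ⊔ d = t := sup_comm c d ▸ ht _ (hsm d c (by rwa [inf_comm, hcd]))
  have hdt : d ⋖ t := htop ▸ hsm c d (by rwa [hcd])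
  exact ⟨b, t, d, hbc, hct, hbd, hdt, hdc, hb, ht,
    fun z hz => eq_or_eq_of_natCard_eq_two (htwo t hct) hct hdt hdc.symm hz,
    fun z hz => eq_or_eq_of_natCard_eq_two (hbtwo b hbc) hbc hbd hdc.symm hz⟩

namespace IsCornerSquare

variable {c b t d x y : L} {D : Diagram L} {p q : L × L}

theorem bot_le_top (hc : IsCornerSquare c b t d) : b ≤ t :=
  hc.bot_covBy.le.trans hc.covBy_top.le

theorem le_bot_of_lt [IsStronglyCoatomic L] (hc : IsCornerSquare c b t d) (h : x < c) : x ≤ b :=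
  let ⟨z, hxz, hzc⟩ := exists_le_covBy_of_lt h
  hc.eq_bot_of_covBy z hzc ▸ hxz

theorem top_le_of_lt [IsStronglyAtomic L] (hc : IsCornerSquare c b t d) (h : c < x) : t ≤ x :=
  let ⟨z, hcz, hzx⟩ := exists_covBy_le_of_lt h
  hc.eq_top_of_covBy z hcz ▸ hzx

theorem sup_ne [IsStronglyCoatomic L] (hc : IsCornerSquare c b t d) (hx : x ≠ c) (hy : y ≠ c) :
    x ⊔ y ≠ c := by
  intro h
  have hxb := hc.le_bot_of_lt ((h ▸ le_sup_left : x ≤ c).lt_of_ne hx)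
  have hyb := hc.le_bot_of_lt ((h ▸ le_sup_right : y ≤ c).lt_of_ne hy)
  exact hc.bot_covBy.lt.not_ge (h ▸ sup_le hxb hyb)

theorem inf_ne [IsStronglyAtomic L] (hc : IsCornerSquare c b t d) (hx : x ≠ c) (hy : y ≠ c) :
    x ⊓ y ≠ c := by
  intro h
  have htx := hc.top_le_of_lt ((h ▸ inf_le_left : c ≤ x).lt_of_ne' hx)
  have hty := hc.top_le_of_lt ((h ▸ inf_le_right : c ≤ y).lt_of_ne' hy)
  exact hc.covBy_top.lt.not_ge (h ▸ le_inf htx hty)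

theorem twin_le_of_lt [IsStronglyAtomic L] (hc : IsCornerSquare c b t d) (h : b < x)
    (hx : x ≠ c) : d ≤ x := by
  obtain ⟨z, hbz, hzx⟩ := exists_covBy_le_of_lt h
  rcases hc.eq_or_eq_of_bot_covBy z hbz with rfl | rfl
  · exact hc.twin_covBy_top.le.trans (hc.top_le_of_lt (hzx.lt_of_ne' hx))
  · exact hzx

theorem le_twin_of_lt [IsStronglyCoatomic L] (hc : IsCornerSquare c b t d) (h : x < t)
    (hx : x ≠ c) : x ≤ d := by
  obtain ⟨z, hxz, hzt⟩ := exists_le_covBy_of_lt h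
  rcases hc.eq_or_eq_of_covBy_top z hzt with rfl | rfl
  · exact (hc.le_bot_of_lt (hxz.lt_of_ne hx)).trans hc.bot_covBy_twin.le
  · exact hxz

theorem top_ne_of_swing (hc : IsCornerSquare c b t d) (h : Swing D p q) : p.2 ≠ c ∧ p.2 ≠ t := by
  have h3 := h.2.1
  constructor <;> rintro he <;> rw [he] at h3
  · have := natCard_le_two_of_forall_eq_or_eq (x := b) (y := b) fun z hz =>
      Or.inl (hc.eq_bot_of_covBy z hz)
    omega
  · have := natCard_le_two_of_forall_eq_or_eq hc.eq_or_eq_of_covBy_top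
    omega

theorem source_eq_of_swingStep_upper [IsStronglyAtomic L] (hc : IsCornerSquare c b t d)
    (h : SwingStep D p (c, t)) : p = (c, t) := by
  rcases h.2 with ⟨hinf, hsup⟩ | hsw
  · have hp : p.1 = c := by_contra fun hp => hc.inf_ne hp hc.covBy_top.ne' hinf
    exact Prod.ext hp (by rw [← hsup, hp, sup_eq_right.2 hc.covBy_top.le])
  · exact absurd hsw.1 (hc.top_ne_of_swing hsw).2

theorem target_eq_of_swingStep_lower [IsStronglyCoatomic L] (hc : IsCornerSquare c b t d)
    (h : SwingStep D (b, c) q) : q = (b, c) := by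
  rcases h.2 with ⟨hinf, hsup⟩ | hsw
  · have hq : q.2 = c := by_contra fun hq => hc.sup_ne hc.bot_covBy.ne hq hsup
    exact Prod.ext (by rw [← hinf, hq, inf_eq_left.2 hc.bot_covBy.le]) hq
  · exact absurd rfl (hc.top_ne_of_swing hsw).1

theorem eq_of_reflTransGen_lower [IsStronglyCoatomic L] (hc : IsCornerSquare c b t d)
    (h : ReflTransGen (SwingStep D) (b, c) q) : q = (b, c) := by
  induction h with
  | refl => rfl
  | tail _ hstep ih => exact hc.target_eq_of_swingStep_lower (ih ▸ hstep)

variable [IsStronglyAtomic L] [IsStronglyCoatomic L]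

theorem sup_corner (hc : IsCornerSquare c b t d) (hx : x ≠ c) (h : ¬ x ≤ b) :
    x ⊔ c = x ⊔ t := by
  have hlt : c < x ⊔ c := le_sup_right.lt_of_ne fun he =>
    h (hc.le_bot_of_lt ((he ▸ le_sup_left : x ≤ c).lt_of_ne hx))
  exact le_antisymm (sup_le_sup_left hc.covBy_top.le x) (sup_le le_sup_left (hc.top_le_of_lt hlt))

theorem inf_corner (hc : IsCornerSquare c b t d) (hx : x ≠ c) (h : ¬ t ≤ x) :
    x ⊓ c = x ⊓ b := by
  have hlt : x ⊓ c < c := inf_le_right.lt_of_ne fun he =>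
    h (hc.top_le_of_lt ((he ▸ inf_le_left : c ≤ x).lt_of_ne' hx))
  exact le_antisymm (le_inf inf_le_left (hc.le_bot_of_lt hlt)) (inf_le_inf_left x hc.bot_covBy.le)

theorem bot_sup_eq_twin_sup (hc : IsCornerSquare c b t d) (hx : x ≠ c) (h : ¬ x ≤ b) :
    b ⊔ x = d ⊔ x := by
  have hlt : b < b ⊔ x := le_sup_left.lt_of_ne fun he => h (he ▸ le_sup_right)
  exact le_antisymm (sup_le_sup_right hc.bot_covBy_twin.le x)
    (sup_le (hc.twin_le_of_lt hlt (hc.sup_ne hc.bot_covBy.ne hx)) le_sup_right)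

theorem top_inf_eq_twin_inf (hc : IsCornerSquare c b t d) (hx : x ≠ c) (h : ¬ t ≤ x) :
    t ⊓ x = d ⊓ x := by
  have hlt : t ⊓ x < t := inf_le_left.lt_of_ne fun he => h (he ▸ inf_le_right)
  exact le_antisymm (le_inf (hc.le_twin_of_lt hlt (hc.inf_ne hc.covBy_top.ne' hx)) inf_le_right)
    (inf_le_inf_right x hc.twin_covBy_top.le)

theorem sup_bot_and_inf_corner (hc : IsCornerSquare c b t d) (hx : x ≠ c) (hxt : x ≠ t)
    (h : x ⊔ c = t) : x ⊔ b = d ∧ x ⊓ c = x ⊓ b := by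
  have hlt : x < t := (h ▸ le_sup_left : x ≤ t).lt_of_ne hxt
  have hxb : ¬ x ≤ b := fun hxb =>
    hc.covBy_top.ne (by rw [← h, sup_eq_right.2 (hxb.trans hc.bot_covBy.le)])
  refine ⟨?_, hc.inf_corner hx hlt.not_ge⟩
  rw [sup_comm, hc.bot_sup_eq_twin_sup hx hxb, sup_eq_left.2 (hc.le_twin_of_lt hlt hx)]


theorem ne_corner_of_swingStep (hc : IsCornerSquare c b t d) {r : L × L}
    (hstep : SwingStep D p q) (hwalk : ReflTransGen (SwingStep D) q r) (hp : p.1 ≠ c)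
    (hr : r.2 ≠ c) : q.1 ≠ c ∧ q.2 ≠ c := by
  have hq : q.1 ⋖ q.2 := hstep.1
  constructor
  · intro hq1
    have hqct : q = (c, t) := Prod.ext hq1 (hc.eq_top_of_covBy _ (hq1 ▸ hq))
    exact hp (congrArg Prod.fst (hc.source_eq_of_swingStep_upper (hqct ▸ hstep)))
  · intro hq2
    have hqbc : q = (b, c) := Prod.ext (hc.eq_bot_of_covBy _ (hq2 ▸ hq)) hq2
    exact hr (congrArg Prod.snd (hc.eq_of_reflTransGen_lower (hqbc ▸ hwalk)))

theorem perspUp_twin_of_upper (hc : IsCornerSquare c b t d) (h : PerspUp p (c, t))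
    (hp : p.1 ≠ c) (hp' : p.2 ≠ c) : PerspUp p (b, d) := by
  obtain ⟨hsup, hinf⟩ := h
  have hpt : p.2 ≠ t := fun he => hp (by rw [hinf, he, inf_eq_right.2 hc.covBy_top.le])
  obtain ⟨hd, hb⟩ := hc.sup_bot_and_inf_corner hp' hpt hsup
  exact ⟨hd, hinf.trans hb⟩

theorem swingStep_twin_of_upper (hc : IsCornerSquare c b t d) (h : SwingStep D (c, t) q)
    (hq : q ≠ (c, t)) : SwingStep D (b, d) q := by
  obtain ⟨hprime, ⟨hinf, hsup⟩ | hsw⟩ := h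
  · have hq2 : q.2 ≠ c := fun he => hprime.ne (by rw [← hinf, he, inf_idem])
    have hq2t : q.2 ≠ t := fun he =>
      hq (Prod.ext (by rw [← hinf, he, inf_eq_left.2 hc.covBy_top.le]) he)
    obtain ⟨hd, hb⟩ := hc.sup_bot_and_inf_corner hq2 hq2t (sup_comm c q.2 ▸ hsup)
    refine ⟨hprime, .inl ⟨?_, sup_comm b q.2 ▸ hd⟩⟩
    rw [← hinf, inf_comm b, ← hb, inf_comm]
  · exact absurd rfl (hc.top_ne_of_swing hsw).2

theorem reflTransGen_twin_of_upper (hc : IsCornerSquare c b t d)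
    (h : ReflTransGen (SwingStep D) (c, t) q) (hq : q ≠ (c, t)) :
    ReflTransGen (SwingStep D) (b, d) q := by
  generalize hct : ((c, t) : L × L) = p at h
  induction h using ReflTransGen.head_induction_on with
  | refl => exact absurd hct.symm hq
  | @head _ y hstep hwalk ih =>
    subst hct
    by_cases hy : y = (c, t)
    · exact ih hy.symm
    · exact .head (hc.swingStep_twin_of_upper hstep hy) hwalk

theorem exists_start_ne_corner (hc : IsCornerSquare c b t d) {r₀ : L × L}
    (hr₀ : IsPrimeInt r₀) (hup : PerspUp p r₀) (hwalk : ReflTransGen (SwingStep D) r₀ q)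
    (hp : p.1 ≠ c ∧ p.2 ≠ c) (hq : q.1 ≠ c ∧ q.2 ≠ c) :
    ∃ r, IsPrimeInt r ∧ PerspUp p r ∧ ReflTransGen (SwingStep D) r q ∧ r.1 ≠ c ∧ r.2 ≠ c := by
  by_cases h1 : r₀.1 = c
  · obtain rfl : r₀ = (c, t) := Prod.ext h1 (hc.eq_top_of_covBy _ (h1 ▸ hr₀))
    exact ⟨(b, d), hc.bot_covBy_twin, hc.perspUp_twin_of_upper hup hp.1 hp.2,
      hc.reflTransGen_twin_of_upper hwalk fun he => hq.1 (congrArg Prod.fst he),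
      hc.bot_covBy.ne, hc.twin_ne⟩
  by_cases h2 : r₀.2 = c
  · obtain rfl : r₀ = (b, c) := Prod.ext (hc.eq_bot_of_covBy _ (h2 ▸ hr₀)) h2
    exact absurd (congrArg Prod.snd (hc.eq_of_reflTransGen_lower hwalk)) hq.2
  exact ⟨r₀, hr₀, hup, hwalk, h1, h2⟩

end IsCornerSquare

local notation "↑₂" p:max => Prod.map Subtype.val Subtype.val p

section Sublattice

variable {S : Sublattice L}

theorem perspUp_val_iff {p q : S × S} : PerspUp (↑₂p) (↑₂q) ↔ PerspUp p q := by
  simp [PerspUp, Subtype.ext_iff]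

theorem perspDn_val_iff {p q : S × S} : PerspDn (↑₂p) (↑₂q) ↔ PerspDn p q := by
  simp [PerspDn, Subtype.ext_iff]

variable {c b t d : L} (hS : (S : Set L) = {x | x ≠ c})
include hS

theorem mem_of_ne {x : L} (hx : x ≠ c) : x ∈ S := by
  rwa [← SetLike.mem_coe, hS]

theorem ne_of_mem {x : L} (hx : x ∈ S) : x ≠ c := by
  rwa [← SetLike.mem_coe, hS] at hx

theorem val_ne (a : S) : (a : L) ≠ c :=
  ne_of_mem hS a.2

variable [IsStronglyAtomic L] [IsStronglyCoatomic L] (hc : IsCornerSquare c b t d)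
include hc

theorem covBy_val_iff {a a' : S} : (a : L) ⋖ a' ↔ a ⋖ a' := by
  refine ⟨fun h => ⟨h.lt, fun z h1 h2 => h.2 h1 h2⟩, fun h => ⟨h.lt, fun z h1 h2 => ?_⟩⟩
  by_cases hz : z = c
  · subst hz
    have had : (a : L) < d := (hc.le_bot_of_lt h1).trans_lt hc.bot_covBy_twin.lt
    have hda : d < a' := hc.twin_covBy_top.lt.trans_le (hc.top_le_of_lt h2)
    exact h.2 (c := ⟨d, mem_of_ne hS hc.twin_ne⟩) had hda
  · exact h.2 (c := ⟨z, mem_of_ne hS hz⟩) h1 h2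

theorem forall_covBy_val_iff {a : S} (ha : (a : L) ≠ t) {P : L → Prop} :
    (∀ z : S, z ⋖ a → P z) ↔ ∀ z : L, z ⋖ (a : L) → P z := by
  refine ⟨fun h z hz => ?_, fun h z hz => h z ((covBy_val_iff hS hc).2 hz)⟩
  have hzc : z ≠ c := fun he => ha (hc.eq_top_of_covBy _ (he ▸ hz))
  exact h ⟨z, mem_of_ne hS hzc⟩ ((covBy_val_iff hS hc).1 hz)

def lowerCoversEquiv {a : S} (ha : (a : L) ≠ t) :
    {z : S // z ⋖ a} ≃ {z : L // z ⋖ (a : L)} where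
  toFun z := ⟨z.1, (covBy_val_iff hS hc).2 z.2⟩
  invFun z := ⟨⟨z.1, mem_of_ne hS fun he => ha (hc.eq_top_of_covBy _ (he ▸ z.2))⟩,
    (covBy_val_iff hS hc).1 z.2⟩
  left_inv _ := rfl
  right_inv _ := rfl

variable {D : Diagram L} {D2 : Diagram S} (hx : ∀ a : S, D2.x a = D.x (a : L))
include hx

theorem swing_val_iff {p q : S × S} : Swing D (↑₂p) (↑₂q) ↔ Swing D2 p q := by
  suffices h : (p.2 : L) ≠ t → (Swing D (↑₂p) (↑₂q) ↔ Swing D2 p q) by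
    refine ⟨fun hsw => (h (hc.top_ne_of_swing hsw).2).1 hsw, fun hsw => (h fun hpt => ?_).2 hsw⟩
    have hd : d ∈ S := mem_of_ne hS hc.twin_ne
    have := natCard_le_two_of_forall_eq_or_eq (P := (· ⋖ p.2)) (x := ⟨d, hd⟩) (y := ⟨d, hd⟩)
      fun z hz => .inl (Subtype.ext ((hc.eq_or_eq_of_covBy_top z
        (hpt ▸ (covBy_val_iff hS hc).2 hz)).resolve_left (val_ne hS z)))
    have := hsw.2.1
    omega
  intro hpt
  simp only [Swing, Prod.map_fst, Prod.map_snd, Subtype.ext_iff, hx,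
    Nat.card_congr (lowerCoversEquiv hS hc hpt),
    forall_covBy_val_iff hS hc hpt (P := fun z => D.x q.1 ≤ D.x z),
    forall_covBy_val_iff hS hc hpt (P := fun z => D.x z ≤ D.x q.1)]

theorem swingStep_val_iff {p q : S × S} : SwingStep D (↑₂p) (↑₂q) ↔ SwingStep D2 p q :=
  and_congr (covBy_val_iff hS hc) (or_congr perspDn_val_iff (swing_val_iff hS hc hx))

theorem reflTransGen_swingStep_val_iff {p q : S × S} :
    ReflTransGen (SwingStep D) (↑₂p) (↑₂q) ↔ ReflTransGen (SwingStep D2) p q := by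
  refine ⟨fun h => ?_, fun h => ReflTransGen.lift (Prod.map Subtype.val Subtype.val)
    (fun _ _ => (swingStep_val_iff hS hc hx).2) _ _ h⟩
  generalize hp : ↑₂p = p' at h
  induction h using ReflTransGen.head_induction_on generalizing p with
  | refl => rw [(Subtype.val_injective.prodMap Subtype.val_injective) hp]
  | @head _ y hstep hwalk ih =>
    subst hp
    obtain ⟨hy₁, hy₂⟩ := hc.ne_corner_of_swingStep hstep hwalk (val_ne hS p.1) (val_ne hS q.2)
    let y' : S × S := (⟨y.1, mem_of_ne hS hy₁⟩, ⟨y.2, mem_of_ne hS hy₂⟩)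
    exact .head ((swingStep_val_iff hS hc hx (q := y')).1 hstep) (ih rfl)

theorem swingSeq_val_iff {p q : S × S} : SwingSeq D (↑₂p) (↑₂q) ↔ SwingSeq D2 p q := by
  rw [swingSeq_iff_reflTransGen, swingSeq_iff_reflTransGen]
  constructor
  · rintro ⟨r₀, hr₀, hup, hwalk⟩
    obtain ⟨r, hr, hup, hwalk, h₁, h₂⟩ := hc.exists_start_ne_corner hr₀ hup hwalk
      ⟨val_ne hS p.1, val_ne hS p.2⟩ ⟨val_ne hS q.1, val_ne hS q.2⟩
    exact ⟨(⟨r.1, mem_of_ne hS h₁⟩, ⟨r.2, mem_of_ne hS h₂⟩), (covBy_val_iff hS hc).1 hr,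
      perspUp_val_iff.1 hup, (reflTransGen_swingStep_val_iff hS hc hx).1 hwalk⟩
  · rintro ⟨r₀, hr₀, hup, hwalk⟩
    exact ⟨↑₂r₀, (covBy_val_iff hS hc).2 hr₀, perspUp_val_iff.2 hup,
      (reflTransGen_swingStep_val_iff hS hc hx).2 hwalk⟩

end Sublattice

namespace LatCon

def restrict (θ : LatCon L) (S : Sublattice L) : LatCon S where
  rel a b := θ.rel a b
  refl a := θ.refl a
  symm := θ.symm
  trans := θ.trans
  sup_comp := θ.sup_comp
  inf_comp := θ.inf_comp

def ofEquivalence (r : L → L → Prop) (hr : Equivalence r)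
    (hsup : ∀ {x y}, r x y → ∀ z, r (x ⊔ z) (y ⊔ z))
    (hinf : ∀ {x y}, r x y → ∀ z, r (x ⊓ z) (y ⊓ z)) : LatCon L where
  rel := r
  refl := hr.refl
  symm := hr.symm
  trans := hr.trans
  sup_comp {_ b c _} h h' := hr.trans (hsup h c) (by simpa only [sup_comm b] using hsup h' b)
  inf_comp {_ b c _} h h' := hr.trans (hinf h c) (by simpa only [inf_comm b] using hinf h' b)

variable {S : Sublattice L} (θ : LatCon S)

def LiftRel (x y : L) : Prop :=
  ∃ (hx : x ∈ S) (hy : y ∈ S), θ.rel ⟨x, hx⟩ ⟨y, hy⟩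

namespace LiftRel

variable {θ} {x y z : L}

theorem symm (h : θ.LiftRel x y) : θ.LiftRel y x :=
  ⟨h.2.1, h.1, θ.symm h.2.2⟩

theorem trans (h : θ.LiftRel x y) (h' : θ.LiftRel y z) : θ.LiftRel x z :=
  ⟨h.1, h'.2.1, θ.trans h.2.2 h'.2.2⟩

theorem sup_right (h : θ.LiftRel x y) (hz : z ∈ S) : θ.LiftRel (x ⊔ z) (y ⊔ z) :=
  ⟨S.supClosed h.1 hz, S.supClosed h.2.1 hz, θ.sup_comp h.2.2 (θ.refl ⟨z, hz⟩)⟩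

theorem inf_right (h : θ.LiftRel x y) (hz : z ∈ S) : θ.LiftRel (x ⊓ z) (y ⊓ z) :=
  ⟨S.infClosed h.1 hz, S.infClosed h.2.1 hz, θ.inf_comp h.2.2 (θ.refl ⟨z, hz⟩)⟩

end LiftRel

/-- The class of `c` in the extension `extendPastCorner` of `θ`, apart from `c` itself. -/
def CornerPartner (b t d x : L) : Prop :=
  (θ.LiftRel d t ∧ θ.LiftRel b x) ∨ (θ.LiftRel b d ∧ θ.LiftRel t x)

def CornerExt (c b t d x y : L) : Prop :=
  x = y ∨ θ.LiftRel x y ∨ (x = c ∧ θ.CornerPartner b t d y) ∨ (y = c ∧ θ.CornerPartner b t d x)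

namespace CornerPartner

variable {θ} {b t d x y z : L}

theorem mem (h : θ.CornerPartner b t d x) : x ∈ S := by
  rcases h with ⟨-, h⟩ | ⟨-, h⟩ <;> exact h.2.1

theorem of_liftRel (h : θ.CornerPartner b t d x) (h' : θ.LiftRel x y) :
    θ.CornerPartner b t d y := by
  rcases h with ⟨h₁, h₂⟩ | ⟨h₁, h₂⟩
  · exact .inl ⟨h₁, h₂.trans h'⟩
  · exact .inr ⟨h₁, h₂.trans h'⟩

theorem liftRel (h : θ.CornerPartner b t d x)
    (h' : θ.CornerPartner b t d y) : θ.LiftRel x y := by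
  rcases h with ⟨hdt, hbx⟩ | ⟨hbd, htx⟩ <;> rcases h' with ⟨hdt', hby⟩ | ⟨hbd', hty⟩
  · exact hbx.symm.trans hby
  · exact hbx.symm.trans (hbd'.trans (hdt.trans hty))
  · exact htx.symm.trans (hdt'.symm.trans (hbd.symm.trans hby))
  · exact htx.symm.trans hty

theorem sup_of_le (h : θ.CornerPartner b t d y) (hz : z ∈ S)
    (hzb : z ≤ b) (hbt : b ≤ t) : θ.CornerPartner b t d (y ⊔ z) := by
  rcases h with ⟨hdt, hby⟩ | ⟨hbd, hty⟩
  · exact .inl ⟨hdt, by simpa [sup_eq_left.2 hzb] using hby.sup_right hz⟩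
  · exact .inr ⟨hbd, by simpa [sup_eq_left.2 (hzb.trans hbt)] using hty.sup_right hz⟩

theorem inf_of_le (h : θ.CornerPartner b t d y) (hz : z ∈ S)
    (htz : t ≤ z) (hbt : b ≤ t) : θ.CornerPartner b t d (y ⊓ z) := by
  rcases h with ⟨hdt, hby⟩ | ⟨hbd, hty⟩
  · exact .inl ⟨hdt, by simpa [inf_eq_left.2 (hbt.trans htz)] using hby.inf_right hz⟩
  · exact .inr ⟨hbd, by simpa [inf_eq_left.2 htz] using hty.inf_right hz⟩

end CornerPartner

end LatCon

section CornerExt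

open LatCon

variable {S : Sublattice L} {θ : LatCon S} {c b t d x y : L} (hS : (S : Set L) = {x | x ≠ c})
include hS

theorem cornerExt_trans {z : L} (h : θ.CornerExt c b t d x y) (h' : θ.CornerExt c b t d y z) :
    θ.CornerExt c b t d x z := by
  rcases h with rfl | hxy | ⟨hx, hy⟩ | ⟨hy, hx⟩
  · exact h'
  · rcases h' with rfl | hyz | ⟨hy, -⟩ | ⟨hz, hy⟩
    · exact .inr (.inl hxy)
    · exact .inr (.inl (hxy.trans hyz))
    · exact absurd hy (ne_of_mem hS hxy.2.1)
    · exact .inr (.inr (.inr ⟨hz, hy.of_liftRel hxy.symm⟩))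
  · rcases h' with rfl | hyz | ⟨hy', -⟩ | ⟨hz, -⟩
    · exact .inr (.inr (.inl ⟨hx, hy⟩))
    · exact .inr (.inr (.inl ⟨hx, hy.of_liftRel hyz⟩))
    · exact absurd hy' (ne_of_mem hS hy.mem)
    · exact .inl (hx.trans hz.symm)
  · rcases h' with rfl | hyz | ⟨-, hz⟩ | ⟨-, hy'⟩
    · exact .inr (.inr (.inr ⟨hy, hx⟩))
    · exact absurd hy (ne_of_mem hS hyz.1)
    · exact .inr (.inl (hx.liftRel hz))
    · exact absurd hy (ne_of_mem hS hy'.mem)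

theorem cornerExt_equivalence : Equivalence (θ.CornerExt c b t d) := by
  refine ⟨fun _ => .inl rfl, fun h => ?_, cornerExt_trans hS⟩
  rcases h with h | h | h | h
  · exact .inl h.symm
  · exact .inr (.inl h.symm)
  · exact .inr (.inr (.inr h))
  · exact .inr (.inr (.inl h))

end CornerExt

section ExtendPastCorner

open LatCon

variable {S : Sublattice L} {θ : LatCon S} {c b t d x y : L} (hS : (S : Set L) = {x | x ≠ c})
  (hc : IsCornerSquare c b t d)
include hS hc

theorem liftRel_bot_twin [IsStronglyAtomic L] {u : L} (h : θ.LiftRel b u) (hu : b < u) :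
    θ.LiftRel b d := by
  have := h.inf_right (mem_of_ne hS hc.twin_ne)
  rwa [inf_eq_left.2 hc.bot_covBy_twin.le,
    inf_eq_right.2 (hc.twin_le_of_lt hu (ne_of_mem hS h.2.1))] at this

theorem liftRel_twin_top [IsStronglyCoatomic L] {v : L} (h : θ.LiftRel t v) (hv : v < t) :
    θ.LiftRel d t := by
  have := (h.sup_right (mem_of_ne hS hc.twin_ne)).symm
  rwa [sup_eq_left.2 hc.twin_covBy_top.le,
    sup_eq_right.2 (hc.le_twin_of_lt hv (ne_of_mem hS h.2.1))] at this

theorem cornerPartner_sup_top [IsStronglyAtomic L] (hxb : x ≤ b) (h : θ.LiftRel x y)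
    (hyb : ¬ y ≤ b) : θ.CornerPartner b t d (y ⊔ t) := by
  have hb := h.sup_right (mem_of_ne hS hc.bot_covBy.ne)
  have ht := h.sup_right (mem_of_ne hS hc.covBy_top.ne')
  rw [sup_eq_right.2 hxb] at hb
  rw [sup_eq_right.2 (hxb.trans hc.bot_le_top)] at ht
  exact .inr ⟨liftRel_bot_twin hS hc hb (right_lt_sup.2 hyb), ht⟩

theorem cornerPartner_inf_bot [IsStronglyCoatomic L] (htx : t ≤ x) (h : θ.LiftRel x y)
    (hty : ¬ t ≤ y) : θ.CornerPartner b t d (y ⊓ b) := by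
  have hb := h.inf_right (mem_of_ne hS hc.bot_covBy.ne)
  have ht := h.inf_right (mem_of_ne hS hc.covBy_top.ne')
  rw [inf_eq_right.2 htx] at ht
  rw [inf_eq_right.2 (hc.bot_le_top.trans htx)] at hb
  exact .inl ⟨liftRel_twin_top hS hc ht (inf_lt_right.2 hty), hb⟩

variable [IsStronglyAtomic L] [IsStronglyCoatomic L]

theorem cornerExt_sup_corner (h : θ.LiftRel x y) :
    θ.CornerExt c b t d (x ⊔ c) (y ⊔ c) := by
  have hbc := hc.bot_covBy.le
  have hx := ne_of_mem hS h.1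
  have hy := ne_of_mem hS h.2.1
  by_cases hxb : x ≤ b <;> by_cases hyb : y ≤ b
  · exact .inl (by rw [sup_eq_right.2 (hxb.trans hbc), sup_eq_right.2 (hyb.trans hbc)])
  · rw [sup_eq_right.2 (hxb.trans hbc), hc.sup_corner hy hyb]
    exact .inr (.inr (.inl ⟨rfl, cornerPartner_sup_top hS hc hxb h hyb⟩))
  · rw [hc.sup_corner hx hxb, sup_eq_right.2 (hyb.trans hbc)]
    exact .inr (.inr (.inr ⟨rfl, cornerPartner_sup_top hS hc hyb h.symm hxb⟩))
  · rw [hc.sup_corner hx hxb, hc.sup_corner hy hyb]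
    exact .inr (.inl (h.sup_right (mem_of_ne hS hc.covBy_top.ne')))

theorem cornerExt_inf_corner (h : θ.LiftRel x y) :
    θ.CornerExt c b t d (x ⊓ c) (y ⊓ c) := by
  have hct := hc.covBy_top.le
  have hx := ne_of_mem hS h.1
  have hy := ne_of_mem hS h.2.1
  by_cases htx : t ≤ x <;> by_cases hty : t ≤ y
  · exact .inl (by rw [inf_eq_right.2 (hct.trans htx), inf_eq_right.2 (hct.trans hty)])
  · rw [inf_eq_right.2 (hct.trans htx), hc.inf_corner hy hty]
    exact .inr (.inr (.inl ⟨rfl, cornerPartner_inf_bot hS hc htx h hty⟩))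
  · rw [hc.inf_corner hx htx, inf_eq_right.2 (hct.trans hty)]
    exact .inr (.inr (.inr ⟨rfl, cornerPartner_inf_bot hS hc hty h.symm htx⟩))
  · rw [hc.inf_corner hx htx, hc.inf_corner hy hty]
    exact .inr (.inl (h.inf_right (mem_of_ne hS hc.bot_covBy.ne)))

theorem cornerExt_corner_sup (h : θ.CornerPartner b t d y) (z : L) :
    θ.CornerExt c b t d (c ⊔ z) (y ⊔ z) := by
  have hy := ne_of_mem hS h.mem
  have hbc := hc.bot_covBy.le
  by_cases hzc : z = c
  · rw [hzc, sup_idem]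
    by_cases hyb : y ≤ b
    · exact .inl (sup_eq_right.2 (hyb.trans hbc)).symm
    rw [hc.sup_corner hy hyb]
    refine .inr (.inr (.inl ⟨rfl, ?_⟩))
    rcases h with ⟨-, hby⟩ | ⟨hbd, hty⟩
    · exact cornerPartner_sup_top hS hc le_rfl hby hyb
    · exact .inr ⟨hbd, by simpa using hty.sup_right (mem_of_ne hS hc.covBy_top.ne')⟩
  have hz := mem_of_ne hS hzc
  by_cases hzb : z ≤ b
  · rw [sup_eq_left.2 (hzb.trans hbc)]
    exact .inr (.inr (.inl ⟨rfl, h.sup_of_le hz hzb hc.bot_le_top⟩))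
  rw [sup_comm c, hc.sup_corner hzc hzb, sup_comm z]
  refine .inr (.inl ?_)
  rcases h with ⟨hdt, hby⟩ | ⟨-, hty⟩
  · have htd := hdt.symm.sup_right hz
    rw [← hc.bot_sup_eq_twin_sup hzc hzb] at htd
    exact htd.trans (hby.sup_right hz)
  · exact hty.sup_right hz

theorem cornerExt_corner_inf (h : θ.CornerPartner b t d y) (z : L) :
    θ.CornerExt c b t d (c ⊓ z) (y ⊓ z) := by
  have hy := ne_of_mem hS h.mem
  have hct := hc.covBy_top.le
  by_cases hzc : z = c
  · rw [hzc, inf_idem]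
    by_cases hty : t ≤ y
    · exact .inl (inf_eq_right.2 (hct.trans hty)).symm
    rw [hc.inf_corner hy hty]
    refine .inr (.inr (.inl ⟨rfl, ?_⟩))
    rcases h with ⟨hdt, hby⟩ | ⟨-, hty'⟩
    · exact .inl ⟨hdt, by simpa using hby.inf_right (mem_of_ne hS hc.bot_covBy.ne)⟩
    · exact cornerPartner_inf_bot hS hc le_rfl hty' hty
  have hz := mem_of_ne hS hzc
  by_cases htz : t ≤ z
  · rw [inf_eq_left.2 (hct.trans htz)]
    exact .inr (.inr (.inl ⟨rfl, h.inf_of_le hz htz hc.bot_le_top⟩))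
  rw [inf_comm c, hc.inf_corner hzc htz, inf_comm z]
  refine .inr (.inl ?_)
  rcases h with ⟨-, hby⟩ | ⟨hbd, hty⟩
  · exact hby.inf_right hz
  · have hbt := hbd.inf_right hz
    rw [← hc.top_inf_eq_twin_inf hzc htz] at hbt
    exact hbt.trans (hty.inf_right hz)

theorem cornerExt_sup_right (h : θ.CornerExt c b t d x y) (z : L) :
    θ.CornerExt c b t d (x ⊔ z) (y ⊔ z) := by
  rcases h with rfl | h | ⟨hx, h⟩ | ⟨hy, h⟩
  · exact .inl rfl
  · by_cases hz : z = c
    · rw [hz]; exact cornerExt_sup_corner hS hc h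
    · exact .inr (.inl (h.sup_right (mem_of_ne hS hz)))
  · rw [hx]; exact cornerExt_corner_sup hS hc h z
  · rw [hy]; exact (cornerExt_equivalence hS).symm (cornerExt_corner_sup hS hc h z)

theorem cornerExt_inf_right (h : θ.CornerExt c b t d x y) (z : L) :
    θ.CornerExt c b t d (x ⊓ z) (y ⊓ z) := by
  rcases h with rfl | h | ⟨hx, h⟩ | ⟨hy, h⟩
  · exact .inl rfl
  · by_cases hz : z = c
    · rw [hz]; exact cornerExt_inf_corner hS hc h
    · exact .inr (.inl (h.inf_right (mem_of_ne hS hz)))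
  · rw [hx]; exact cornerExt_corner_inf hS hc h z
  · rw [hy]; exact (cornerExt_equivalence hS).symm (cornerExt_corner_inf hS hc h z)

def LatCon.extendPastCorner (θ : LatCon S) : LatCon L :=
  ofEquivalence (θ.CornerExt c b t d) (cornerExt_equivalence hS) (cornerExt_sup_right hS hc)
    (cornerExt_inf_right hS hc)

theorem collapses_val_iff {p q : S × S} : Collapses (↑₂p) (↑₂q) ↔ Collapses p q := by
  refine ⟨fun h θ hθ => ?_, fun h θ hθ => h (θ.restrict S) hθ⟩
  rcases h (θ.extendPastCorner hS hc) (.inr (.inl ⟨p.1.2, p.2.2, hθ⟩)) with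
    hq | ⟨_, _, hq⟩ | ⟨hq, -⟩ | ⟨hq, -⟩
  · exact Subtype.ext hq ▸ θ.refl _
  · exact hq
  · exact absurd hq (val_ne hS q.1)
  · exact absurd hq (val_ne hS q.2)

end ExtendPastCorner

theorem swing_lemma_remove_corner_general [Fintype L] (hsm : Semimodular L)
    (D : Diagram L) (c : L) (hc : IsLatCorner c)
    (S : Sublattice L) (hS : (S : Set L) = {x : L | x ≠ c})
    (D2 : Diagram S) (hx : ∀ a : S, D2.x a = D.x (a : L))
    (h : SwingLemmaHolds L D) : SwingLemmaHolds S D2 := by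
  obtain ⟨b, t, d, hcs⟩ := hc.exists_isCornerSquare hsm
  intro p q hp hq hpq
  rw [← collapses_val_iff hS hcs, ← swingSeq_val_iff hS hcs hx]
  exact h _ _ ((covBy_val_iff hS hcs).2 hp) ((covBy_val_iff hS hcs).2 hq)
    ((Subtype.val_injective.prodMap Subtype.val_injective).ne hpq)

theorem swing_lemma_remove_corner [Fintype L] (hsm : Semimodular L)
    (hslim : Slim L) (D : Diagram L) (c : L) (hc : IsLatCorner c)
    (S : Sublattice L) (hS : (S : Set L) = {x : L | x ≠ c})
    (D2 : Diagram S) (hx : ∀ a : S, D2.x a = D.x (a : L))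
    (h : SwingLemmaHolds L D) : SwingLemmaHolds S D2 :=
  swing_lemma_remove_corner_general hsm D c hc S hS D2 hx h
end

section
/- Let L be a finite lattice and let p, q be prime intervals of L with 1_q ≤ 1_p, 0_p ∧ 1_q ≤ 0_q, and p perspective down onto [0_q, 1_p ∨ 0_q], where p is not perspective to q and p ≠ q. Then the set {0_p ∧ 1_q, 0_p, 0_q, 1_q, 0_p ∨ 0_q} is a five-element sublattice of L isomorphic to N_5. -/
universe u

variable {L : Type u} [Lattice L]

/-!
Write `p = [a, b]`, `q = [c, d]`. Since `p` is not perspective down to `q`, `a ⊓ d < c`; since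
`p ≠ q`, `d < b` (otherwise `a ≤ c < b` and the covering `a ⋖ b` forces `a = c`). Then `c ≰ a`, so
the covering `a ⋖ b` gives `a ⊔ c = b = a ⊔ d`, while `a ⊓ c = a ⊓ d`: the pentagon.
-/

section Pentagon

variable {α : Type*} [Lattice α] {a b c d : α}

theorem CovBy.sup_eq_of_le_of_not_le (hab : a ⋖ b) (hcb : c ≤ b) (hca : ¬c ≤ a) : a ⊔ c = b :=
  (hab.eq_or_eq le_sup_left (sup_le hab.le hcb)).resolve_left fun h => hca (sup_eq_left.mp h)

theorem CovBy.eq_of_le_of_lt (hab : a ⋖ b) (hac : a ≤ c) (hcb : c < b) : a = c :=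
  ((hab.eq_or_eq hac hcb.le).resolve_right hcb.ne).symm

theorem isN5_of_covBy (hab : a ⋖ a ⊔ d) (hc : a ⊓ d < c) (hcd : c < d) (hdb : d < a ⊔ d) :
    IsN5 (a ⊓ d) a c d (a ⊔ c) := by
  have hca : ¬c ≤ a := fun h => hc.not_ge (le_inf h hcd.le)
  have hsup : a ⊔ c = a ⊔ d := hab.sup_eq_of_le_of_not_le (hcd.le.trans hdb.le) hca
  have hinf : a ⊓ c = a ⊓ d := le_antisymm (inf_le_inf_left a hcd.le) (le_inf inf_le_left hc.le)
  have had : a ⊓ d < a := inf_lt_left.mpr fun h => hdb.ne (sup_eq_right.mpr h).symm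
  rw [hsup]
  exact ⟨had, hab.lt, hc, hcd, hdb, hinf, rfl, hsup, rfl⟩

end Pentagon

theorem pperspDn_N5_general (p q : L × L) (hp : IsPrimeInt p)
    (hq : IsPrimeInt q) (h1 : q.2 ≤ p.2) (h2 : p.1 ⊓ q.2 ≤ q.1) (h3 : p.1 ⊔ q.2 = p.2)
    (hnp : ¬ Persp p q) (hne : p ≠ q) :
    IsN5 (p.1 ⊓ q.2) p.1 q.1 q.2 (p.1 ⊔ q.1) := by
  obtain ⟨a, b⟩ := p
  obtain ⟨c, d⟩ := q
  dsimp only [IsPrimeInt] at hp hq h1 h2 h3 ⊢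
  have hc : a ⊓ d < c := h2.lt_of_ne fun h => hnp (Or.inr ⟨h, h3⟩)
  have hdb : d < b := h1.lt_of_ne fun hdb => hne <| by
    subst hdb
    have hac : a ≤ c := (inf_eq_left.mpr hp.le).ge.trans h2
    rw [hp.eq_of_le_of_lt hac hq.lt]
  subst h3
  exact isN5_of_covBy hp hc hq.lt hdb

theorem pperspDn_N5 [Fintype L] (p q : L × L) (hp : IsPrimeInt p)
    (hq : IsPrimeInt q) (h1 : q.2 ≤ p.2) (h2 : p.1 ⊓ q.2 ≤ q.1) (h3 : p.1 ⊔ q.2 = p.2)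
    (hnp : ¬ Persp p q) (hne : p ≠ q) :
    IsN5 (p.1 ⊓ q.2) p.1 q.1 q.2 (p.1 ⊔ q.1) :=
  pperspDn_N5_general p q hp hq h1 h2 h3 hnp hne
end

section
/- Let L be a finite lattice, let I = [0_I, 1_I] be an interval of L that is not a prime interval, and let u ∈ I with 0_I covered by u and u < 1_I. Let b be a prime interval with 0_I = 1_I ∧ 0_b and 1_b ≤ u ∨ 0_b. Then the prime interval a = [0_I, u] satisfies: a is prime-perspective up to b. -/
universe u

variable {L : Type u} [Lattice L]

theorem ppersp_up_of_interval [Fintype L] (I : L × L) (hI : I.1 < I.2)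
    (hnp : ¬ I.1 ⋖ I.2) (u : L) (hu1 : I.1 ⋖ u) (hu2 : u < I.2)
    (b : L × L) (hb : IsPrimeInt b) (hb1 : I.1 = I.2 ⊓ b.1) (hb2 : b.2 ≤ u ⊔ b.1) :
    PPerspUp (I.1, u) b := by
  have h1 : I.1 ≤ b.1 := hb1.le.trans inf_le_right
  refine ⟨h1, le_antisymm ?_ (le_inf hu1.le h1), hb2⟩
  calc u ⊓ b.1 ≤ I.2 ⊓ b.1 := inf_le_inf_right _ hu2.le
    _ = I.1 := hb1.symm
end
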